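/- arXiv:1310.5403 — 7 statements merged into one kernel-verified Lean document; each statement's English description precedes it below -/
import Mathlib

section
/- Let α ≥ 2 be an integer and let λ > 1/(2α) be a real number. Then the series Σ_{k∈E} 2^{−2λ μ_α(⌊k/2⌋)} converges and equals A_{α,λ,1} = Σ_{v=1}^{α−1} ∏_{i=1}^{v} 1/(2^{2λi}−1) + (1/(2^{2λα}−2)) ∏_{i=1}^{α−1} 1/(2^{2λi}−1). -/
open scoped BigOperators

attribute [local instance] Classical.propDecidable

noncomputable section

/-- `mu α k` is μ_α(k): with k = 2^{a_1−1} + ⋯ + 2^{a_v−1}, a_1 > ⋯ > a_v > 0, the sum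
a_1 + ⋯ + a_{min(α,v)}; μ_α(0) = 0. -/
def mu (α k : ℕ) : ℕ :=
  (((((List.range (k+1)).filter (fun i => k.testBit i)).reverse).take α).map (· + 1)).sum

/-- The set E of positive integers with even binary sum-of-digits. -/
def Eset : Set ℕ := {k | 1 ≤ k ∧ Even ((Nat.digits 2 k).sum)}

/-- tr_{m'}(k) = κ_0 + κ_1 x + ⋯ + κ_{m'−1} x^{m'−1} ∈ 𝔽₂[x]. -/
def trunc (m' k : ℕ) : Polynomial (ZMod 2) :=
  ∑ i ∈ Finset.range m', Polynomial.monomial i (if k.testBit i then 1 else 0)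

/-- The polynomial n(x) ∈ 𝔽₂[x] associated to n ∈ ℕ via its binary digits. -/
def nPoly (n : ℕ) : Polynomial (ZMod 2) := trunc (n+1) n

/-- C_1 = 1/2, C_τ = 2^{−τ}(5/3)^{τ−2} for τ ≥ 2. -/
def Cconst (τ : ℕ) : ℝ := if τ = 1 then 1/2 else (2:ℝ)^(-(τ:ℝ)) * (5/3:ℝ)^((τ:ℝ)-2)

/-- C'_{α,ν} = Σ_{τ=ν}^{α} C_τ² 2^{−2(τ−ν)}. -/
def Cprime (α ν : ℕ) : ℝ :=
  ∑ τ ∈ Finset.Icc ν α, (Cconst τ)^2 * (2:ℝ)^(-(2:ℝ)*((τ:ℝ)-(ν:ℝ)))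

/-- C̃_{2α} = 2^{−2α+1}(5/3)^{2α−2}. -/
def Ctilde (α : ℕ) : ℝ := (2:ℝ)^(-(2:ℝ)*(α:ℝ)+1) * (5/3:ℝ)^(2*(α:ℝ)-2)

/-- D_α = max_{1≤ν≤α} (C'_{α,ν} + C̃_{2α} 2^{−2(α−ν)}). -/
def Dconst (α : ℕ) : ℝ :=
  sSup {x : ℝ | ∃ ν, 1 ≤ ν ∧ ν ≤ α ∧
    x = Cprime α ν + Ctilde α * (2:ℝ)^(-(2:ℝ)*((α:ℝ)-(ν:ℝ)))}

/-- A_{α,λ,1}. -/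
def A1 (α : ℕ) (lam : ℝ) : ℝ :=
  (∑ v ∈ Finset.Icc 1 (α-1), ∏ i ∈ Finset.Icc 1 v, (1 / ((2:ℝ)^(2*lam*(i:ℝ)) - 1)))
  + (1/((2:ℝ)^(2*lam*(α:ℝ)) - 2)) * ∏ i ∈ Finset.Icc 1 (α-1), 1/((2:ℝ)^(2*lam*(i:ℝ)) - 1)

/-- A_{α,λ,2}. -/
def A2 (α : ℕ) (lam : ℝ) : ℝ :=
  (∑ v ∈ Finset.Icc 1 ((α-1)/2), ∏ i ∈ Finset.Icc 1 (2*v),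
      ((2:ℝ)^(2*lam) / ((2:ℝ)^(2*lam*(i:ℝ)) - 1)))
  + ((2:ℝ)^(2*lam)/((2:ℝ)^(2*lam*(α:ℝ)) - 2)) *
      ∏ i ∈ Finset.Icc 1 (α-1), (2:ℝ)^(2*lam)/((2:ℝ)^(2*lam*(i:ℝ)) - 1)

/-- Membership of a d-dimensional frequency vector k in the dual polynomial lattice
D^⊥(q,p): tr_{m'}(k_1)q_1 + ⋯ + tr_{m'}(k_d)q_d ≡ a (mod p) with deg(a) < m'−m. -/
def inDual (m m' d : ℕ) (q : ℕ → Polynomial (ZMod 2)) (p : Polynomial (ZMod 2))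
    (k : ℕ → ℕ) : Prop :=
  ∃ a : Polynomial (ZMod 2), a.degree < ((m' - m : ℕ) : WithBot ℕ) ∧
    p ∣ ((∑ j ∈ Finset.range d, trunc m' (k j) * q j) - a)

/-- The inner sum Σ_{k_u ∈ E^{|u|}, (k_u,0) ∈ D^⊥(q,p)} ∏_{j∈u} 2^{−2μ_α(⌊k_j/2⌋)}
(in dimension d). -/
def dualSum (m m' α d : ℕ) (q : ℕ → Polynomial (ZMod 2)) (p : Polynomial (ZMod 2))
    (u : Finset ℕ) : ℝ :=
  ∑' k : (↥u → ℕ),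
    if (∀ j, (k j) ∈ Eset) ∧
        inDual m m' d q p (fun j => if h : j ∈ u then k ⟨j, h⟩ else 0)
    then ∏ j, (2:ℝ)^(-(2:ℝ) * (mu α (k j / 2) : ℝ)) else 0

/-- The quality criterion B_{α,γ}(q,p) in dimension d (coordinates indexed 0,…,d−1). -/
def Bcrit (d m m' α : ℕ) (γ : Finset ℕ → ℝ) (q : ℕ → Polynomial (ZMod 2))
    (p : Polynomial (ZMod 2)) : ℝ :=
  ∑ u ∈ (Finset.range d).powerset.filter (· ≠ ∅),
    γ u * Dconst α ^ u.card * dualSum m m' α d q p u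

/-- ξ_i digit of the dyadic rational x = l/2^{m'} (with ξ_i = 0 for i > m'). -/
def xi (m' l i : ℕ) : ℕ := if 1 ≤ i ∧ i ≤ m' ∧ l.testBit (m' - i) then 1 else 0

/-- Walsh function value wal_k(l/2^{m'}) = (−1)^{ξ_1κ_0 + ξ_2κ_1 + ⋯}. -/
def wal (m' l k : ℕ) : ℝ :=
  (-1:ℝ) ^ (∑ i ∈ Finset.range (k+1), (if k.testBit i then xi m' l (i+1) else 0))

/-- ω_α(l/2^{m'}) = Σ_{k∈E} 2^{−2μ_α(⌊k/2⌋)} wal_k(l/2^{m'}). -/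
def omega (α m' l : ℕ) : ℝ :=
  ∑' k : ↥Eset, (2:ℝ)^(-(2:ℝ) * (mu α ((k:ℕ)/2) : ℝ)) * wal m' l (k:ℕ)

/-- The numerator L ∈ {0,…,2^{m'}−1} such that v_{m'}(f/p) = L/2^{m'}: the l-th binary
digit t_l of v_{m'}(f/p) is the constant coefficient of (f·x^l) div p. -/
def vnum (m' : ℕ) (f p : Polynomial (ZMod 2)) : ℕ :=
  ∑ l ∈ Finset.Icc 1 m', (if ((f * Polynomial.X ^ l) / p).coeff 0 = 1 then 2^(m' - l) else 0)

/-- The polynomial in G_{m'} with coefficient vector c. -/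
def polyOf {n : ℕ} (c : Fin n → ZMod 2) : Polynomial (ZMod 2) :=
  ∑ i : Fin n, Polynomial.monomial (i : ℕ) (c i)

/-- Strictly decreasing v-tuples of positive integers a_1 > ⋯ > a_v > 0. -/
def decTuples (v : ℕ) : Type := {a : Fin v → ℕ // StrictAnti a ∧ ∀ i, 0 < a i}

end

/-!
A number `k ∈ E` is determined by `n = ⌊k/2⌋ ≥ 1`, so with `x = 2^{-2λ}` the series is
`∑_{n ≥ 1} x^{μ_α(n)}`. Splitting off the leading binary digit, `n = 2^a + m` with `m < 2^a`, gives
`μ_{γ+1}(n) = a + 1 + μ_γ(m)`; hence the dyadic block sums `T_γ(a) = ∑_{m < 2^a} x^{μ_γ(m)}` (`muPowSum x γ a`)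
satisfy `T_{γ+1}(a+1) = T_{γ+1}(a) + x^{a+1} T_γ(a)`. The generating series
`F_γ(y) = ∑_a y^{a+1} T_γ(a)` therefore obeys `F_0(y) = y/(1-2y)` and
`F_{γ+1}(y) = y/(1-y) · (1 + F_γ(xy))`, which unrolls to the product formula `muGen x y γ`; at
`γ = α - 1`, `y = x` this is `A_{α,λ,1}`, and the convergence condition `2x^α < 1` is `λ > 1/(2α)`.
-/

open Finset Filter Topology

lemma filter_testBit_range_eq {k N M : ℕ} (hk : k < 2 ^ N) (hNM : N ≤ M) :
    (List.range M).filter (k.testBit ·) = (List.range N).filter (k.testBit ·) := by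
  obtain ⟨t, rfl⟩ := Nat.exists_eq_add_of_le hNM
  have htop : (List.map (N + ·) (List.range t)).filter (k.testBit ·) = [] := by
    simp only [List.filter_eq_nil_iff, List.mem_map, List.mem_range]
    rintro _ ⟨i, -, rfl⟩
    simpa using Nat.testBit_eq_false_of_lt
      (hk.trans_le (Nat.pow_le_pow_right two_pos (Nat.le_add_right N i)))
  rw [List.range_add, List.filter_append, htop, List.append_nil]

lemma mu_eq_of_lt_two_pow {k N : ℕ} (γ : ℕ) (hk : k < 2 ^ N) :
    mu γ k = ((((List.range N).filter (k.testBit ·)).reverse.take γ).map (· + 1)).sum := by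
  have hk' : k < 2 ^ (k + 1) :=
    Nat.lt_two_pow_self.trans (Nat.pow_lt_pow_right one_lt_two k.lt_succ_self)
  rw [mu, ← filter_testBit_range_eq hk' (Nat.le_add_right _ N),
    filter_testBit_range_eq hk (Nat.le_add_left N _)]

lemma mu_zero_left (k : ℕ) : mu 0 k = 0 := by
  simp [mu]

lemma mu_zero_right (γ : ℕ) : mu γ 0 = 0 := by
  simp [mu]

lemma mu_succ_two_pow_add (γ : ℕ) {a m : ℕ} (hm : m < 2 ^ a) :
    mu (γ + 1) (2 ^ a + m) = (a + 1) + mu γ m := by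
  have hlt : 2 ^ a + m < 2 ^ (a + 1) := by rw [pow_succ]; omega
  have hbits : (List.range (a + 1)).filter ((2 ^ a + m).testBit ·)
      = (List.range a).filter (m.testBit ·) ++ [a] := by
    rw [List.range_succ, List.filter_append]
    congr 1
    · exact List.filter_congr fun i hi => Nat.testBit_two_pow_add_gt (List.mem_range.mp hi) m
    · simp [Nat.testBit_two_pow_add_eq, Nat.testBit_eq_false_of_lt hm]
  rw [mu_eq_of_lt_two_pow _ hlt, mu_eq_of_lt_two_pow _ hm, hbits]
  simp

lemma digits_sum_two_eq_mod_add (k : ℕ) :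
    (Nat.digits 2 k).sum = k % 2 + (Nat.digits 2 (k / 2)).sum := by
  rcases k.eq_zero_or_pos with rfl | hk
  · simp
  · simp [Nat.digits_def' one_lt_two hk]

/-- `k ∈ E` is determined by `⌊k/2⌋ ≥ 1`: its last binary digit is the parity of `δ(⌊k/2⌋)`. -/
def natEquivEset : ℕ ≃ Eset where
  toFun n := ⟨2 * (n + 1) + (Nat.digits 2 (n + 1)).sum % 2, by
    have hhalf : (2 * (n + 1) + (Nat.digits 2 (n + 1)).sum % 2) / 2 = n + 1 := by omega
    refine ⟨by omega, ?_⟩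
    rw [digits_sum_two_eq_mod_add, hhalf, Nat.even_iff]
    omega⟩
  invFun k := (k : ℕ) / 2 - 1
  left_inv n := by
    show (2 * (n + 1) + (Nat.digits 2 (n + 1)).sum % 2) / 2 - 1 = n
    omega
  right_inv := by
    rintro ⟨k, hk1, hk2⟩
    rw [digits_sum_two_eq_mod_add, Nat.even_iff] at hk2
    have hk : 2 ≤ k := by
      by_contra! h
      interval_cases k
      simp at hk2
    apply Subtype.ext
    simp only
    rw [show k / 2 - 1 + 1 = k / 2 by omega]
    omega

lemma hasSum_Eset_comp_div_two_iff {g : ℕ → ℝ} {s : ℝ} :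
    HasSum (fun k : Eset => g ((k : ℕ) / 2)) s ↔ HasSum (fun n => g (n + 1)) s := by
  rw [← natEquivEset.hasSum_iff]
  congr! 2 with n
  simp only [Function.comp_apply, natEquivEset, Equiv.coe_fn_mk]
  congr 1
  omega

lemma hasSum_of_succ_eq_mul_add {f g : ℕ → ℝ} {y G : ℝ} (hf : ∀ n, 0 ≤ f n) (hg : ∀ n, 0 ≤ g n)
    (hy1 : y < 1) (hG : HasSum g G) (hrec : ∀ n, f (n + 1) = y * f n + g n) :
    HasSum f ((f 0 + G) / (1 - y)) := by
  have hpartial : ∀ N, ∑ n ∈ range (N + 1), f n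
      = f 0 + y * ∑ n ∈ range N, f n + ∑ n ∈ range N, g n := by
    intro N
    simp only [sum_range_succ', hrec, sum_add_distrib, mul_sum]
    ring
  have hsummable : Summable f := by
    refine summable_of_sum_range_le hf (c := (f 0 + G) / (1 - y)) fun N => ?_
    have hmono : ∑ n ∈ range N, f n ≤ ∑ n ∈ range (N + 1), f n := by
      rw [sum_range_succ]; linarith [hf N]
    have hgN : ∑ n ∈ range N, g n ≤ G := sum_le_hasSum _ (fun n _ => hg n) hG
    rw [le_div_iff₀ (by linarith)]
    nlinarith [hpartial N]
  obtain ⟨S, hS⟩ := hsummable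
  have hshift : HasSum (fun n => f (n + 1)) (S - f 0) := by
    simpa using (hasSum_nat_add_iff' 1).mpr hS
  have hS' : S - f 0 = y * S + G := by
    simp only [hrec] at hshift
    exact hshift.unique ((hS.mul_left y).add hG)
  rwa [show (f 0 + G) / (1 - y) = S by
    rw [div_eq_iff (by linarith)]
    linear_combination -hS']

lemma hasSum_of_tendsto_sum_range_two_pow {f : ℕ → ℝ} {s : ℝ} (hf : ∀ n, 0 ≤ f n)
    (h : Tendsto (fun A => ∑ n ∈ range (2 ^ A), f n) atTop (𝓝 s)) : HasSum f s := by
  rw [hasSum_iff_tendsto_nat_of_nonneg hf, tendsto_iff_tendsto_subseq_of_monotone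
    (fun _ _ hNM => sum_le_sum_of_subset_of_nonneg (range_mono hNM) fun n _ _ => hf n)
    (tendsto_pow_atTop_atTop_of_one_lt one_lt_two)]
  exact h

section GeneratingFunction

variable (x : ℝ)

noncomputable def muPowSum (γ a : ℕ) : ℝ := ∑ m ∈ range (2 ^ a), x ^ mu γ m

lemma muPowSum_nonneg {x : ℝ} (hx : 0 ≤ x) (γ a : ℕ) : 0 ≤ muPowSum x γ a :=
  sum_nonneg fun _ _ => pow_nonneg hx _

lemma muPowSum_zero_left (a : ℕ) : muPowSum x 0 a = 2 ^ a := by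
  simp [muPowSum, mu_zero_left]

lemma muPowSum_zero_right (γ : ℕ) : muPowSum x γ 0 = 1 := by
  simp [muPowSum, mu_zero_right]

lemma muPowSum_succ_succ (γ a : ℕ) :
    muPowSum x (γ + 1) (a + 1) = muPowSum x (γ + 1) a + x ^ (a + 1) * muPowSum x γ a := by
  rw [muPowSum, pow_succ, mul_two, sum_range_add, muPowSum, muPowSum, mul_sum]
  congr 1
  refine sum_congr rfl fun m hm => ?_
  rw [mu_succ_two_pow_add γ (mem_range.mp hm), pow_add]

lemma muPowSum_succ_left (γ a : ℕ) :
    muPowSum x (γ + 1) a = 1 + ∑ b ∈ range a, x ^ (b + 1) * muPowSum x γ b := by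
  induction a with
  | zero => simp [muPowSum_zero_right]
  | succ a ih => rw [muPowSum_succ_succ, ih, sum_range_succ, add_assoc]

variable (y : ℝ)

noncomputable def muGenProd (v : ℕ) : ℝ := ∏ j ∈ range v, x ^ j * y / (1 - x ^ j * y)

noncomputable def muGen (γ : ℕ) : ℝ :=
  ∑ v ∈ range γ, muGenProd x y (v + 1) + muGenProd x y γ * (x ^ γ * y / (1 - 2 * (x ^ γ * y)))

lemma muGenProd_succ (v : ℕ) : muGenProd x y (v + 1) = y / (1 - y) * muGenProd x (x * y) v := by
  simp only [muGenProd, prod_range_succ', pow_succ]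
  rw [mul_comm]
  congr 1
  · simp
  · exact prod_congr rfl fun j _ => by ring_nf

lemma muGen_succ (γ : ℕ) : muGen x y (γ + 1) = y / (1 - y) * (1 + muGen x (x * y) γ) := by
  rw [muGen, muGen, sum_range_succ', muGenProd_succ x y γ, muGenProd_succ x y 0,
    sum_congr rfl fun v _ => muGenProd_succ x y (v + 1), ← mul_sum,
    show muGenProd x (x * y) 0 = 1 from prod_range_zero _, pow_succ]
  ring

lemma muGen_self (γ : ℕ) :
    muGen x x γ = ∑ v ∈ Icc 1 γ, ∏ i ∈ Icc 1 v, x ^ i / (1 - x ^ i)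
      + x ^ (γ + 1) / (1 - 2 * x ^ (γ + 1)) * ∏ i ∈ Icc 1 γ, x ^ i / (1 - x ^ i) := by
  have hprod : ∀ v, muGenProd x x v = ∏ i ∈ Icc 1 v, x ^ i / (1 - x ^ i) := fun v => by
    rw [muGenProd, ← Ico_add_one_right_eq_Icc, prod_Ico_eq_prod_range, add_tsub_cancel_right]
    exact prod_congr rfl fun j _ => by rw [← pow_succ, add_comm]
  rw [muGen, hprod, ← pow_succ, mul_comm, ← Ico_add_one_right_eq_Icc, sum_Ico_eq_sum_range,
    add_tsub_cancel_right]
  simp only [hprod, add_comm 1]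

end GeneratingFunction

theorem hasSum_pow_mul_muPowSum {x : ℝ} (hx : 0 ≤ x) (hx1 : x ≤ 1) (γ : ℕ) {y : ℝ} (hy : 0 ≤ y)
    (hy1 : y < 1) (hγ : 2 * (x ^ γ * y) < 1) :
    HasSum (fun a => y ^ (a + 1) * muPowSum x γ a) (muGen x y γ) := by
  induction γ generalizing y with
  | zero =>
    have h := hasSum_of_succ_eq_mul_add (y := 2 * y) (g := 0)
      (f := fun a => y ^ (a + 1) * muPowSum x 0 a)
      (fun a => mul_nonneg (by positivity) (muPowSum_nonneg hx _ _)) (fun _ => le_rfl)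
      (by simpa using hγ) hasSum_zero (fun a => by
        simp only [muPowSum_zero_left, Pi.zero_apply]; ring)
    convert h using 1
    simp [muGen, muGenProd, muPowSum_zero_right]
  | succ γ ih =>
    have hxy : 2 * (x ^ γ * (x * y)) < 1 := by rw [pow_succ] at hγ; linarith
    have IH := ih (mul_nonneg hx hy) (by nlinarith) hxy
    have h := hasSum_of_succ_eq_mul_add (y := y)
      (f := fun a => y ^ (a + 1) * muPowSum x (γ + 1) a)
      (g := fun a => y * ((x * y) ^ (a + 1) * muPowSum x γ a))
      (fun a => mul_nonneg (by positivity) (muPowSum_nonneg hx _ _))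
      (fun a => mul_nonneg hy (mul_nonneg (by positivity) (muPowSum_nonneg hx _ _)))
      hy1 (IH.mul_left y) (fun a => by simp only [muPowSum_succ_succ]; ring)
    convert h using 1
    rw [muGen_succ, muPowSum_zero_right]
    ring

theorem hasSum_pow_mu_succ {x : ℝ} (hx : 0 ≤ x) (γ : ℕ) (hγ : 2 * x ^ (γ + 1) < 1) :
    HasSum (fun n => x ^ mu (γ + 1) n) (1 + muGen x x γ) := by
  have hx1 : x < 1 := by
    by_contra! h
    linarith [one_le_pow₀ (n := γ + 1) h]
  have hgen := hasSum_pow_mul_muPowSum hx hx1.le γ hx hx1 (by rwa [← pow_succ])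
  refine hasSum_of_tendsto_sum_range_two_pow (fun n => pow_nonneg hx _) ?_
  change Tendsto (fun A => muPowSum x (γ + 1) A) atTop _
  simpa only [muPowSum_succ_left] using hgen.tendsto_sum_nat.const_add 1

lemma muGen_two_rpow_eq_A1 (lam : ℝ) (γ : ℕ) :
    muGen ((2 : ℝ) ^ (-(2 * lam))) ((2 : ℝ) ^ (-(2 * lam))) γ = A1 (γ + 1) lam := by
  have hpow : ∀ i : ℕ, ((2 : ℝ) ^ (-(2 * lam))) ^ i = ((2 : ℝ) ^ (2 * lam * i))⁻¹ := fun i => by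
    rw [← Real.rpow_mul_natCast zero_le_two, ← Real.rpow_neg zero_le_two, neg_mul]
  have hne : ∀ i : ℕ, (2 : ℝ) ^ (2 * lam * i) ≠ 0 := fun i => by positivity
  rw [muGen_self, A1, add_tsub_cancel_right]
  simp only [hpow]
  congr 1
  · refine sum_congr rfl fun v _ => prod_congr rfl fun i _ => ?_
    field_simp [hne i]
  · congr 1
    · field_simp
    · refine prod_congr rfl fun i _ => ?_
      field_simp [hne i]


/-- Σ_{k∈E} 2^{−2λμ_α(⌊k/2⌋)} converges to A_{α,λ,1}. -/
theorem stmt2 (α : ℕ) (hα : 2 ≤ α) (lam : ℝ) (hlam : 1/(2*(α:ℝ)) < lam) :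
    HasSum (fun k : ↥Eset => (2:ℝ) ^ (-(2*lam*(mu α ((k:ℕ)/2) : ℝ)))) (A1 α lam) := by
  obtain ⟨γ, rfl⟩ : ∃ γ, α = γ + 1 := ⟨α - 1, by omega⟩
  set x : ℝ := (2 : ℝ) ^ (-(2 * lam))
  have hpow : ∀ n : ℕ, (2 : ℝ) ^ (-(2 * lam * n)) = x ^ n := fun n => by
    rw [← Real.rpow_mul_natCast zero_le_two, neg_mul]
  have hcrit : 2 * x ^ (γ + 1) < 1 := by
    have hexp : 1 < 2 * lam * ((γ + 1 : ℕ) : ℝ) := by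
      rw [div_lt_iff₀ (by positivity)] at hlam
      linarith
    rw [← hpow, ← Real.rpow_one_add' zero_le_two (by linarith)]
    exact Real.rpow_lt_one_of_one_lt_of_neg one_lt_two (by linarith)
  simp only [hpow]
  rw [hasSum_Eset_comp_div_two_iff (g := fun n => x ^ mu (γ + 1) n), ← muGen_two_rpow_eq_A1]
  simpa [mu_zero_right] using
    (hasSum_nat_add_iff' 1).mpr (hasSum_pow_mu_succ (by positivity) γ hcrit)
end

section
/- Let m ≤ m' be positive integers, let p ∈ 𝔽₂[x] be an irreducible polynomial with deg(p) = m', let d ≥ 1, and let k_1,…,k_d be positive integers. Let N be the number of vectors (q_1,…,q_d) ∈ G_{m'}^d such that tr_{m'}(k_1)q_1 + ⋯ + tr_{m'}(k_d)q_d ≡ a (mod p) for some a ∈ 𝔽₂[x] with deg(a) < m'−m. If p divides tr_{m'}(k_j) for every j = 1,…,d, then N = 2^{m'd}; if p does not divide tr_{m'}(k_j) for at least one j, then N = 2^{m'd − m}. -/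
open scoped BigOperators

attribute [local instance] Classical.propDecidable

/-! Sending a coefficient vector `c` to `∑ j, tr(k_j) · q_j mod p` is an additive homomorphism
into the field `𝔽₂[x]/(p)`, and the counted vectors form the preimage of the subgroup of residues
of polynomials of degree `< m' - m`, a subgroup of index `2^m`. If `p` divides every `tr(k_j)`
the homomorphism vanishes and every vector is counted. Otherwise some `tr(k_j)` is a unit mod `p`,
the homomorphism is onto, and the preimage has the same index `2^m`, hence `2^(m'd - m)` elements.
-/

section
open Polynomial

lemma polyOf_eq_degreeLTEquiv_symm {n : ℕ} (c : Fin n → ZMod 2) :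
    polyOf c = ((degreeLTEquiv (ZMod 2) n).symm c : (ZMod 2)[X]) := rfl

noncomputable def polyOfHom (n : ℕ) : (Fin n → ZMod 2) →+ (ZMod 2)[X] :=
  (degreeLT (ZMod 2) n).subtype.toAddMonoidHom.comp
    (degreeLTEquiv (ZMod 2) n).symm.toLinearMap.toAddMonoidHom

@[simp]
lemma polyOfHom_apply {n : ℕ} (c : Fin n → ZMod 2) : polyOfHom n c = polyOf c := rfl

lemma degree_polyOf_lt {n : ℕ} (c : Fin n → ZMod 2) : (polyOf c).degree < n :=
  mem_degreeLT.1 ((degreeLTEquiv (ZMod 2) n).symm c).2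

lemma polyOf_injective (n : ℕ) : Function.Injective (polyOf : (Fin n → ZMod 2) → (ZMod 2)[X]) :=
  Subtype.val_injective.comp (degreeLTEquiv (ZMod 2) n).symm.injective

lemma exists_polyOf_eq_of_degree_lt {n : ℕ} {f : (ZMod 2)[X]} (hf : f.degree < n) :
    ∃ c : Fin n → ZMod 2, polyOf c = f :=
  ⟨degreeLTEquiv (ZMod 2) n ⟨f, mem_degreeLT.2 hf⟩, by
    rw [polyOf_eq_degreeLTEquiv_symm, LinearEquiv.symm_apply_apply]⟩

namespace AdjoinRoot

variable {p : (ZMod 2)[X]}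

lemma exists_mk_polyOf_eq (hp : p ≠ 0) (y : AdjoinRoot p) :
    ∃ c : Fin p.natDegree → ZMod 2, mk p (polyOf c) = y := by
  obtain ⟨f, rfl⟩ := mk_surjective y
  obtain ⟨c, hc⟩ := exists_polyOf_eq_of_degree_lt
    ((degree_mod_lt f hp).trans_eq (degree_eq_natDegree hp))
  refine ⟨c, mk_eq_mk.2 ?_⟩
  rw [hc, EuclideanDomain.mod_eq_sub_mul_div, sub_sub_cancel_left, dvd_neg]
  exact dvd_mul_right p _

lemma mk_polyOf_injective (hp : p ≠ 0) {n : ℕ} (hn : n ≤ p.natDegree) :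
    Function.Injective fun c : Fin n → ZMod 2 => mk p (polyOf c) := by
  intro c c' h
  have hdvd : p ∣ polyOf (c - c') := by
    simpa only [← polyOfHom_apply, map_sub] using mk_eq_mk.1 h
  have hdeg : (polyOf (c - c')).degree < p.degree :=
    (degree_polyOf_lt _).trans_le <| (Nat.cast_le.2 hn).trans (degree_eq_natDegree hp).ge
  refine sub_eq_zero.1 (polyOf_injective n ?_)
  rw [eq_zero_of_dvd_of_degree_lt hdvd hdeg, ← polyOfHom_apply, map_zero]

lemma natCard_eq_two_pow (hp : p ≠ 0) : Nat.card (AdjoinRoot p) = 2 ^ p.natDegree := by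
  rw [← Nat.card_eq_of_bijective _ ⟨mk_polyOf_injective hp le_rfl, exists_mk_polyOf_eq hp⟩]
  simp

noncomputable def lowDegreeResidues (p : (ZMod 2)[X]) (s : ℕ) : AddSubgroup (AdjoinRoot p) :=
  ((mk p).toAddMonoidHom.comp (polyOfHom s)).range

lemma mk_mem_lowDegreeResidues_iff {s : ℕ} {f : (ZMod 2)[X]} :
    mk p f ∈ lowDegreeResidues p s ↔ ∃ a : (ZMod 2)[X], a.degree < s ∧ p ∣ f - a := by
  constructor
  · rintro ⟨c, hc⟩
    exact ⟨polyOf c, degree_polyOf_lt c, mk_eq_mk.1 hc.symm⟩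
  · rintro ⟨a, ha, hfa⟩
    obtain ⟨c, rfl⟩ := exists_polyOf_eq_of_degree_lt ha
    exact ⟨c, (mk_eq_mk.2 hfa).symm⟩

lemma natCard_lowDegreeResidues (hp : p ≠ 0) {s : ℕ} (hs : s ≤ p.natDegree) :
    Nat.card (lowDegreeResidues p s) = 2 ^ s := by
  refine (Nat.card_range_of_injective (mk_polyOf_injective hp hs)).trans ?_
  simp

lemma index_lowDegreeResidues (hp : p ≠ 0) {s : ℕ} (hs : s ≤ p.natDegree) :
    (lowDegreeResidues p s).index = 2 ^ (p.natDegree - s) := by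
  have := (lowDegreeResidues p s).card_mul_index
  rw [natCard_lowDegreeResidues hp hs, natCard_eq_two_pow hp, ← Nat.add_sub_cancel' hs,
    pow_add] at this
  exact Nat.eq_of_mul_eq_mul_left (by positivity) this

noncomputable def weightedSumResidue (p : (ZMod 2)[X]) {d : ℕ} (t : Fin d → (ZMod 2)[X])
    (n : ℕ) : (Fin d → Fin n → ZMod 2) →+ AdjoinRoot p where
  toFun c := mk p (∑ j, t j * polyOf (c j))
  map_zero' := by simp [← polyOfHom_apply]
  map_add' c c' := by simp [← polyOfHom_apply, mul_add, Finset.sum_add_distrib]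

lemma weightedSumResidue_apply {d n : ℕ} (t : Fin d → (ZMod 2)[X])
    (c : Fin d → Fin n → ZMod 2) :
    weightedSumResidue p t n c = mk p (∑ j, t j * polyOf (c j)) := rfl

lemma weightedSumResidue_surjective (hp : Irreducible p) {d : ℕ} {t : Fin d → (ZMod 2)[X]}
    {j₀ : Fin d} (hj₀ : ¬ p ∣ t j₀) :
    Function.Surjective (weightedSumResidue p t p.natDegree) := by
  have := Fact.mk hp
  intro y
  obtain ⟨x, hx⟩ := exists_mk_polyOf_eq hp.ne_zero (y / mk p (t j₀))
  refine ⟨Pi.single j₀ x, ?_⟩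
  have hsum : ∑ j, t j * polyOf ((Pi.single j₀ x : Fin d → Fin p.natDegree → ZMod 2) j) =
      t j₀ * polyOf x := by
    refine (Fintype.sum_eq_single j₀ fun j hj => ?_).trans (by rw [Pi.single_eq_same])
    rw [Pi.single_eq_of_ne hj, ← polyOfHom_apply, map_zero, mul_zero]
  rw [weightedSumResidue_apply, hsum, map_mul, hx, mul_div_cancel₀]
  rwa [Ne, mk_eq_zero]

lemma card_filter_eq_natCard_comap {d n s : ℕ} (t : Fin d → (ZMod 2)[X]) :
    (Finset.univ.filter fun c : Fin d → Fin n → ZMod 2 =>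
      ∃ a : (ZMod 2)[X], a.degree < (s : WithBot ℕ) ∧ p ∣ (∑ j, t j * polyOf (c j)) - a).card =
      Nat.card ((lowDegreeResidues p s).comap (weightedSumResidue p t n)) := by
  rw [← Fintype.card_subtype, ← Nat.card_eq_fintype_card]
  exact Nat.card_congr <| Equiv.subtypeEquivRight fun c => by
    rw [AddSubgroup.mem_comap, weightedSumResidue_apply, mk_mem_lowDegreeResidues_iff]

end AdjoinRoot

end

theorem stmt5_general (m m' d : ℕ) (hmm : m ≤ m')
    (p : Polynomial (ZMod 2)) (hp : Irreducible p) (hdeg : p.natDegree = m')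
    (k : Fin d → ℕ) :
    ((∀ j, p ∣ trunc m' (k j)) →
      (Finset.univ.filter (fun c : Fin d → Fin m' → ZMod 2 =>
        ∃ a : Polynomial (ZMod 2), a.degree < ((m' - m : ℕ) : WithBot ℕ) ∧
          p ∣ ((∑ j, trunc m' (k j) * polyOf (c j)) - a))).card = 2^(m'*d)) ∧
    ((∃ j, ¬ p ∣ trunc m' (k j)) →
      (Finset.univ.filter (fun c : Fin d → Fin m' → ZMod 2 =>
        ∃ a : Polynomial (ZMod 2), a.degree < ((m' - m : ℕ) : WithBot ℕ) ∧
          p ∣ ((∑ j, trunc m' (k j) * polyOf (c j)) - a))).card = 2^(m'*d - m)) := by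
  subst hdeg
  simp only [AdjoinRoot.card_filter_eq_natCard_comap]
  set f := AdjoinRoot.weightedSumResidue p (fun j => trunc p.natDegree (k j)) p.natDegree
  set T := AdjoinRoot.lowDegreeResidues p (p.natDegree - m)
  have hV : Nat.card (Fin d → Fin p.natDegree → ZMod 2) = 2 ^ (p.natDegree * d) := by
    simp [Nat.card_eq_fintype_card, pow_mul]
  constructor
  · intro hall
    have htop : T.comap f = ⊤ := eq_top_iff.2 fun c _ => by
      rw [AddSubgroup.mem_comap, AdjoinRoot.weightedSumResidue_apply,
        AdjoinRoot.mk_eq_zero.2 (Finset.dvd_sum fun j _ => (hall j).mul_right _)]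
      exact T.zero_mem
    rw [htop, AddSubgroup.card_top, hV]
  · rintro ⟨j₀, hj₀⟩
    have hidx : (T.comap f).index = 2 ^ m := by
      rw [AddSubgroup.index_comap_of_surjective T
          (AdjoinRoot.weightedSumResidue_surjective hp hj₀),
        AdjoinRoot.index_lowDegreeResidues hp.ne_zero (Nat.sub_le _ _), Nat.sub_sub_self hmm]
    have hcard := (T.comap f).card_mul_index
    rw [hidx, hV] at hcard
    apply Nat.eq_of_mul_eq_mul_right (pow_pos two_pos m)
    rw [hcard, ← pow_add, Nat.sub_add_cancel (hmm.trans (Nat.le_mul_of_pos_right _ j₀.pos))]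

/-- the number of generating vectors (q_1,…,q_d) ∈ G_{m'}^d (parametrized by
coefficient vectors) satisfying the dual congruence. -/
theorem stmt5 (m m' d : ℕ) (hm : 0 < m) (hmm : m ≤ m') (hd : 1 ≤ d)
    (p : Polynomial (ZMod 2)) (hp : Irreducible p) (hdeg : p.natDegree = m')
    (k : Fin d → ℕ) (hk : ∀ j, 1 ≤ k j) :
    ((∀ j, p ∣ trunc m' (k j)) →
      (Finset.univ.filter (fun c : Fin d → Fin m' → ZMod 2 =>
        ∃ a : Polynomial (ZMod 2), a.degree < ((m' - m : ℕ) : WithBot ℕ) ∧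
          p ∣ ((∑ j, trunc m' (k j) * polyOf (c j)) - a))).card = 2^(m'*d)) ∧
    ((∃ j, ¬ p ∣ trunc m' (k j)) →
      (Finset.univ.filter (fun c : Fin d → Fin m' → ZMod 2 =>
        ∃ a : Polynomial (ZMod 2), a.degree < ((m' - m : ℕ) : WithBot ℕ) ∧
          p ∣ ((∑ j, trunc m' (k j) * polyOf (c j)) - a))).card = 2^(m'*d - m)) :=
  stmt5_general m m' d hmm p hp hdeg k
end

section
/- Let α ≥ 1 be an integer and let λ > 1/(2α) be a real number. Then Σ_{v=α}^{∞} Σ_{0<a_v<⋯<a_1} 2^{−2λ(a_1+⋯+a_α)} = (1/(2^{2λα} − 2)) ∏_{i=1}^{α−1} 1/(2^{2λ i} − 1), where the inner sum ranges over all strictly decreasing v-tuples of positive integers a_1 > ⋯ > a_v > 0 and the summand involves only the α largest entries a_1,…,a_α. -/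
open scoped BigOperators

attribute [local instance] Classical.propDecidable

/-!
Write `a₁ > ⋯ > a_v > 0` through its gaps `g_j = a_j - a_{j+1} - 1 ≥ 0` (with `a_{v+1} = 0`), so
that `a_i = ∑_{j ≥ i} (g_j + 1)`. This identifies strictly decreasing `v`-tuples with `ℕ^v`, and
`a₁ + ⋯ + a_α = ∑_j min(j, α) (g_j + 1)`. With `r = 2^{-2λ}` the inner sum therefore factors into
geometric series, `∏_{w < α} r^w/(1 - r^w) · (r^α/(1 - r^α))^{v-α+1}`, where
`r^w/(1 - r^w) = 1/(2^{2λw} - 1)`. The sum over `v ≥ α` is one more geometric series, of ratio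
`s = 1/(2^{2λα} - 1) < 1` since `2λα > 1`, and `s/(1 - s) = 1/(2^{2λα} - 2)`.
Working in `ℝ≥0∞` frees all these rearrangements of summability side conditions.
-/

open Finset ENNReal

theorem ENNReal.tsum_fin_pi_prod {β : Type*} :
    ∀ (n : ℕ) (f : Fin n → β → ℝ≥0∞), ∑' g : Fin n → β, ∏ j, f j (g j) = ∏ j, ∑' b, f j b
  | 0, f => by
    rw [tsum_eq_single finZeroElim fun g hg => (hg (Subsingleton.elim g _)).elim]
    simp
  | n + 1, f => by
    rw [← (Fin.consEquiv fun _ => β).tsum_eq, ENNReal.tsum_prod', Fin.prod_univ_succ,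
      ← ENNReal.tsum_fin_pi_prod n fun j => f j.succ, ← ENNReal.tsum_mul_right]
    simp [Fin.consEquiv, Fin.prod_univ_succ, ENNReal.tsum_mul_left]

theorem ENNReal.tsum_pow_sub_add_one (α : ℕ) (x : ℝ≥0∞) :
    ∑' v : {v : ℕ // α ≤ v}, x ^ ((v : ℕ) - α + 1) = x * (1 - x)⁻¹ := by
  let e : ℕ ≃ {v : ℕ // α ≤ v} :=
    ⟨fun n => ⟨α + n, Nat.le_add_right α n⟩, fun v => v - α, fun n => by simp,
      fun v => Subtype.ext (Nat.add_sub_cancel' v.2)⟩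
  rw [← e.tsum_eq, ← ENNReal.tsum_geometric_add_one]
  simp [e]

theorem ENNReal.ofReal_inv_mul_inv_one_sub_ofReal_inv {t : ℝ} (ht : 1 < t) :
    ENNReal.ofReal t⁻¹ * (1 - ENNReal.ofReal t⁻¹)⁻¹ = ENNReal.ofReal (t - 1)⁻¹ := by
  have h1 : 0 < 1 - t⁻¹ := sub_pos.2 (inv_lt_one_of_one_lt₀ ht)
  rw [← ENNReal.ofReal_one, ← ENNReal.ofReal_sub _ (by positivity),
    ← ENNReal.ofReal_inv_of_pos h1, ← ENNReal.ofReal_mul (by positivity)]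
  congr 1
  field_simp

theorem ENNReal.toReal_tsum_tsum {α : Type*} {β : α → Type*} {f : (a : α) → β a → ℝ≥0∞}
    (hf : ∑' a, ∑' b, f a b ≠ ∞) :
    (∑' a, ∑' b, f a b).toReal = ∑' a, ∑' b, (f a b).toReal := by
  rw [ENNReal.tsum_toReal_eq (ENNReal.ne_top_of_tsum_ne_top hf)]
  exact tsum_congr fun a =>
    ENNReal.tsum_toReal_eq (ENNReal.ne_top_of_tsum_ne_top (ENNReal.ne_top_of_tsum_ne_top hf a))

theorem Fin.prod_univ_min_succ {M : Type*} [CommMonoid M] (f : ℕ → M) {α v : ℕ} (hα : 1 ≤ α)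
    (hαv : α ≤ v) :
    ∏ j : Fin v, f (min ((j : ℕ) + 1) α) = (∏ w ∈ Ico 1 α, f w) * f α ^ (v - α + 1) := by
  have hshift : ∏ j ∈ range v, f (min (j + 1) α) = ∏ w ∈ Ico 1 (v + 1), f (min w α) := by
    rw [prod_Ico_eq_prod_range, Nat.add_sub_cancel]
    simp only [add_comm 1]
  rw [Fin.prod_univ_eq_prod_range (fun j => f (min (j + 1) α)), hshift,
    ← prod_Ico_consecutive _ hα (by omega : α ≤ v + 1)]
  congr 1
  · exact prod_congr rfl fun w hw => by rw [min_eq_left (mem_Ico.1 hw).2.le]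
  · rw [prod_congr rfl fun w hw => by rw [min_eq_right (mem_Ico.1 hw).1], Finset.prod_const,
      Nat.card_Ico]
    congr 1; omega

namespace decTuples

variable {v : ℕ}

def ofGaps (g : Fin v → ℕ) (i : Fin v) : ℕ := ∑ j with i ≤ j, (g j + 1)

def next (a : Fin v → ℕ) (i : Fin v) : ℕ := if h : (i : ℕ) + 1 < v then a ⟨i + 1, h⟩ else 0

def gaps (a : Fin v → ℕ) (i : Fin v) : ℕ := a i - next a i - 1

theorem ofGaps_eq (g : Fin v → ℕ) (i : Fin v) : ofGaps g i = g i + 1 + next (ofGaps g) i := by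
  have hsplit : univ.filter (i ≤ ·) = insert i (univ.filter (i < ·)) := by
    ext j; simp [le_iff_eq_or_lt, eq_comm]
  rw [ofGaps, hsplit, sum_insert (by simp)]
  congr 1
  unfold next
  split_ifs with h
  · rw [ofGaps]; congr 1 -- `i < j` unfolds to `i + 1 ≤ j`
  · convert sum_empty
    ext j
    simp only [mem_filter, mem_univ, true_and, Fin.lt_def, notMem_empty, iff_false]
    omega

theorem next_lt {a : Fin v → ℕ} (ha : StrictAnti a) (hpos : ∀ i, 0 < a i) (i : Fin v) :
    next a i < a i := by
  unfold next
  split_ifs with h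
  · exact ha (Fin.lt_def.2 (Nat.lt_succ_self _))
  · exact hpos i

theorem ofGaps_gaps {a : Fin v → ℕ} (ha : StrictAnti a) (hpos : ∀ i, 0 < a i) :
    ofGaps (gaps a) = a := by
  funext i
  induction h : v - (i : ℕ) generalizing i with
  | zero => omega
  | succ n ih =>
    have hnext : next (ofGaps (gaps a)) i = next a i := by
      unfold next; split_ifs with hi
      · exact ih _ (by simp; omega)
      · rfl
    rw [ofGaps_eq, hnext, gaps]
    have := next_lt ha hpos i
    omega

theorem ofGaps_strictAnti (g : Fin v → ℕ) : StrictAnti (ofGaps g) := fun i j hij =>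
  sum_lt_sum_of_subset (fun k hk => by simp at hk ⊢; exact hij.le.trans hk) (i := i)
    (by simp) (by simpa using hij) (Nat.succ_pos _) fun _ _ _ => Nat.zero_le _

def equivGaps (v : ℕ) : (Fin v → ℕ) ≃ decTuples v where
  toFun g := ⟨ofGaps g, ofGaps_strictAnti g, fun i => by rw [ofGaps_eq]; omega⟩
  invFun a := gaps a.1
  left_inv g := by funext i; simp only [gaps]; rw [ofGaps_eq g i]; omega
  right_inv a := Subtype.ext (ofGaps_gaps a.2.1 a.2.2)

theorem sum_ofGaps_filter_lt (α : ℕ) (g : Fin v → ℕ) :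
    ∑ i ∈ univ.filter (fun i : Fin v => (i : ℕ) < α), ofGaps g i =
      ∑ j : Fin v, min ((j : ℕ) + 1) α * (g j + 1) := by
  unfold ofGaps
  rw [sum_comm' (t' := (univ : Finset (Fin v)))
    (s' := fun j => univ.filter fun i : Fin v => (i : ℕ) < min ((j : ℕ) + 1) α)
    fun i j => by simp only [mem_filter, mem_univ, true_and, and_true, Fin.le_def]; omega]
  refine sum_congr rfl fun j _ => ?_
  rw [sum_const, smul_eq_mul, Fin.card_filter_val_lt, min_eq_right (by omega)]

theorem tsum_pow_sum_filter_lt (q : ℝ≥0∞) (α v : ℕ) :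
    ∑' a : decTuples v, q ^ (∑ i ∈ univ.filter (fun i : Fin v => (i : ℕ) < α), a.1 i) =
      ∏ j : Fin v, q ^ min ((j : ℕ) + 1) α * (1 - q ^ min ((j : ℕ) + 1) α)⁻¹ := by
  rw [← (equivGaps v).tsum_eq]
  have hfactor (g : Fin v → ℕ) :
      q ^ (∑ i ∈ univ.filter (fun i : Fin v => (i : ℕ) < α), (equivGaps v g).1 i) =
        ∏ j : Fin v, (q ^ min ((j : ℕ) + 1) α) ^ (g j + 1) := by
    change q ^ (∑ i ∈ _, ofGaps g i) = _
    simp only [sum_ofGaps_filter_lt, ← prod_pow_eq_pow_sum, pow_mul]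
  rw [tsum_congr hfactor,
    ENNReal.tsum_fin_pi_prod v fun j k => (q ^ min ((j : ℕ) + 1) α) ^ (k + 1)]
  simp only [ENNReal.tsum_geometric_add_one]

theorem tsum_tsum_pow_sum_filter_lt (q : ℝ≥0∞) {α : ℕ} (hα : 1 ≤ α) :
    ∑' v : {v : ℕ // α ≤ v}, ∑' a : decTuples v,
        q ^ (∑ i ∈ univ.filter (fun i : Fin v => (i : ℕ) < α), a.1 i) =
      (∏ w ∈ Ico 1 α, q ^ w * (1 - q ^ w)⁻¹) *
        ((q ^ α * (1 - q ^ α)⁻¹) * (1 - q ^ α * (1 - q ^ α)⁻¹)⁻¹) := by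
  simp only [tsum_pow_sum_filter_lt]
  simp only [fun v : {v : ℕ // α ≤ v} =>
    Fin.prod_univ_min_succ (fun w => q ^ w * (1 - q ^ w)⁻¹) hα v.2]
  rw [ENNReal.tsum_mul_left, ENNReal.tsum_pow_sub_add_one]

end decTuples

/-- Σ_{v=α}^{∞} Σ_{0<a_v<⋯<a_1} 2^{−2λ(a_1+⋯+a_α)}
= (1/(2^{2λα}−2)) ∏_{i=1}^{α−1} 1/(2^{2λi}−1). -/
theorem stmt10 (α : ℕ) (hα : 1 ≤ α) (lam : ℝ) (hlam : 1/(2*(α:ℝ)) < lam) :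
    ∑' v : {v : ℕ // α ≤ v}, ∑' a : decTuples v.1,
        (2:ℝ) ^ (-(2*lam *
          (∑ i ∈ Finset.univ.filter (fun i : Fin v.1 => (i:ℕ) < α), (a.1 i : ℝ))))
      = (1/((2:ℝ)^(2*lam*(α:ℝ)) - 2)) *
          ∏ i ∈ Finset.Icc 1 (α-1), 1/((2:ℝ)^(2*lam*(i:ℝ)) - 1) := by
  have hlam0 : 0 < lam := (by positivity : (0 : ℝ) < 1 / (2 * α)).trans hlam
  set t : ℕ → ℝ := fun w => (2 : ℝ) ^ (2 * lam * w) with ht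
  have ht1 (w : ℕ) (hw : 1 ≤ w) : 1 < t w :=
    Real.one_lt_rpow one_lt_two (mul_pos (by positivity) (Nat.cast_pos.2 hw))
  have htα : 2 < t α := by
    have : 1 < 2 * lam * α := by rw [div_lt_iff₀ (by positivity)] at hlam; linarith
    simpa using Real.rpow_lt_rpow_of_exponent_lt one_lt_two this
  set q := ENNReal.ofReal ((2 : ℝ) ^ (2 * lam))⁻¹
  have hq (w : ℕ) : q ^ w = ENNReal.ofReal (t w)⁻¹ := by
    rw [← ENNReal.ofReal_pow (by positivity), inv_pow, ← Real.rpow_mul_natCast (by norm_num)]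
  have hgeom (w : ℕ) (hw : 1 ≤ w) : q ^ w * (1 - q ^ w)⁻¹ = ENNReal.ofReal (t w - 1)⁻¹ := by
    rw [hq]; exact ENNReal.ofReal_inv_mul_inv_one_sub_ofReal_inv (ht1 w hw)
  have hnonneg (w : ℕ) (hw : w ∈ Ico 1 α) : 0 ≤ (t w - 1)⁻¹ :=
    (inv_pos.2 (sub_pos.2 (ht1 w (mem_Ico.1 hw).1))).le
  have hsum := decTuples.tsum_tsum_pow_sum_filter_lt q hα
  rw [prod_congr rfl fun w hw => hgeom w (mem_Ico.1 hw).1, hgeom α hα,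
    ENNReal.ofReal_inv_mul_inv_one_sub_ofReal_inv (by linarith),
    ← ENNReal.ofReal_prod_of_nonneg hnonneg] at hsum
  calc _ = ∑' v : {v : ℕ // α ≤ v}, ∑' a : decTuples v,
          (q ^ ∑ i ∈ univ.filter (fun i : Fin v => (i : ℕ) < α), a.1 i).toReal := by
        refine tsum_congr fun v => tsum_congr fun a => ?_
        rw [hq, ENNReal.toReal_ofReal (by positivity), Real.rpow_neg zero_le_two]
        simp only [ht, Nat.cast_sum]
    _ = _ := by
        rw [← ENNReal.toReal_tsum_tsum (by rw [hsum]; finiteness), hsum, ENNReal.toReal_mul,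
          ENNReal.toReal_ofReal (prod_nonneg hnonneg), ENNReal.toReal_ofReal (inv_pos.2 (by linarith)).le, mul_comm,
          Icc_sub_one_right_eq_Ico_of_not_isMin (by simp; omega)]
        norm_num [t, sub_sub]
end

section
/- Let λ > 0 be a real number and let t, m' ≥ 1 be integers. Then the sum over all strictly decreasing t-tuples of integers a_1 > a_2 > ⋯ > a_t ≥ m' of 2^{−2λ(a_1+⋯+a_t)} converges and equals 2^{−2λ t (m'−1)} ∏_{i=1}^{t} 1/(2^{2λ i} − 1). -/
open scoped BigOperators

attribute [local instance] Classical.propDecidable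

/-! Write a tuple `a_1 > ⋯ > a_t ≥ m'` through its gaps `c_i = a_i - a_{i+1} - 1 ≥ 0`, where
`a_{t+1} = m' - 1`. This is a bijection onto `ℕ^t`, and `a_i = m' - 1 + ∑_{j ≥ i} (c_j + 1)` gives
`a_1 + ⋯ + a_t = t (m' - 1) + ∑_j j (c_j + 1)`. Hence the series factors as
`2^{-2λt(m'-1)} ∏_j ∑_{k ≥ 1} 2^{-2λjk}`, a product of geometric series. -/

section Gaps

open Finset

variable {n : ℕ}

def tupleOfGaps (m : ℕ) (c : Fin n → ℕ) (i : Fin n) : ℕ :=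
  m + c i + ∑ j ∈ Ioi i, (c j + 1)

/-- Inverse of `tupleOfGaps m`: the gap below the last entry is measured from `m - 1`. -/
def gapsOfTuple (m : ℕ) (a : Fin n → ℕ) (i : Fin n) : ℕ :=
  a i - if h : (i : ℕ) + 1 < n then a ⟨i + 1, h⟩ + 1 else m

theorem tupleOfGaps_add_one (m : ℕ) (c : Fin n → ℕ) (i : Fin n) :
    tupleOfGaps m c i + 1 = m + ∑ j ∈ Ici i, (c j + 1) := by
  rw [← Ioi_insert, sum_insert notMem_Ioi_self, tupleOfGaps]
  ring

theorem tupleOfGaps_of_lt (m : ℕ) (c : Fin n → ℕ) {i : Fin n} (h : (i : ℕ) + 1 < n) :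
    tupleOfGaps m c i = tupleOfGaps m c ⟨i + 1, h⟩ + c i + 1 := by
  have hIoi : Ioi i = Ici ⟨i + 1, h⟩ := by
    ext j
    simp only [mem_Ioi, mem_Ici, Fin.lt_def, Fin.le_def]
    omega
  have := tupleOfGaps_add_one m c ⟨i + 1, h⟩
  rw [tupleOfGaps, hIoi]
  omega

theorem tupleOfGaps_of_not_lt (m : ℕ) (c : Fin n → ℕ) {i : Fin n} (h : ¬(i : ℕ) + 1 < n) :
    tupleOfGaps m c i = m + c i := by
  have hIoi : Ioi i = ∅ := by
    ext j
    simp only [mem_Ioi, Fin.lt_def, notMem_empty, iff_false]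
    omega
  simp [tupleOfGaps, hIoi]

theorem strictAnti_tupleOfGaps (m : ℕ) (c : Fin n → ℕ) : StrictAnti (tupleOfGaps m c) := by
  intro i i' hii'
  have hsub : ∑ j ∈ Ici i', (c j + 1) ≤ ∑ j ∈ Ioi i, (c j + 1) :=
    sum_le_sum_of_subset fun j hj => mem_Ioi.2 (hii'.trans_le (mem_Ici.1 hj))
  have := tupleOfGaps_add_one m c i'
  show _ < m + c i + ∑ j ∈ Ioi i, (c j + 1)
  omega

theorem le_tupleOfGaps (m : ℕ) (c : Fin n → ℕ) (i : Fin n) : m ≤ tupleOfGaps m c i := by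
  rw [tupleOfGaps, add_assoc]
  exact Nat.le_add_right _ _

theorem gapsOfTuple_tupleOfGaps (m : ℕ) (c : Fin n → ℕ) :
    gapsOfTuple m (tupleOfGaps m c) = c := by
  funext i
  rw [gapsOfTuple]
  split_ifs with h
  · rw [tupleOfGaps_of_lt m c h]; omega
  · rw [tupleOfGaps_of_not_lt m c h]; omega

theorem tupleOfGaps_gapsOfTuple {m : ℕ} {a : Fin n → ℕ} (ha : StrictAnti a)
    (hm : ∀ i, m ≤ a i) : tupleOfGaps m (gapsOfTuple m a) = a := by
  suffices ∀ k (i : Fin n), n = i + 1 + k → tupleOfGaps m (gapsOfTuple m a) i = a i from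
    funext fun i => this (n - i - 1) i (by omega)
  intro k
  induction k with
  | zero =>
    intro i hi
    have h : ¬(i : ℕ) + 1 < n := by omega
    have := hm i
    rw [tupleOfGaps_of_not_lt _ _ h, gapsOfTuple, dif_neg h]
    omega
  | succ k ih =>
    intro i hi
    have h : (i : ℕ) + 1 < n := by omega
    have hlt : a ⟨i + 1, h⟩ < a i := ha (Fin.lt_def.2 (Nat.lt_succ_self _))
    rw [tupleOfGaps_of_lt _ _ h, ih ⟨i + 1, h⟩ (by rw [Fin.val_mk]; omega), gapsOfTuple, dif_pos h]
    omega

def tupleOfGapsEquiv (m n : ℕ) :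
    (Fin n → ℕ) ≃ {a : Fin n → ℕ // StrictAnti a ∧ ∀ i, m ≤ a i} where
  toFun c := ⟨tupleOfGaps m c, strictAnti_tupleOfGaps m c, le_tupleOfGaps m c⟩
  invFun a := gapsOfTuple m a
  left_inv := gapsOfTuple_tupleOfGaps m
  right_inv a := Subtype.ext (tupleOfGaps_gapsOfTuple a.2.1 a.2.2)

theorem sum_tupleOfGaps_add (m : ℕ) (c : Fin n → ℕ) :
    ∑ i, tupleOfGaps m c i + n = n * m + ∑ j : Fin n, ((j : ℕ) + 1) * (c j + 1) := by
  have hswap : ∑ i, ∑ j ∈ Ici i, (c j + 1) = ∑ j, ∑ i ∈ Iic j, (c j + 1) :=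
    sum_comm' (fun i j => by simp)
  calc ∑ i, tupleOfGaps m c i + n = ∑ i, (tupleOfGaps m c i + 1) := by
        rw [sum_add_distrib, sum_const, card_univ, Fintype.card_fin, smul_eq_mul, mul_one]
    _ = n * m + ∑ j : Fin n, ((j : ℕ) + 1) * (c j + 1) := by
        simp only [tupleOfGaps_add_one]
        rw [sum_add_distrib, hswap]
        simp only [sum_const, card_univ, Fintype.card_fin, Fin.card_Iic, smul_eq_mul]

end Gaps

theorem hasSum_prod_pi_of_nonneg {β : Type*} {n : ℕ} {g : Fin n → β → ℝ} {S : Fin n → ℝ}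
    (hg : ∀ i b, 0 ≤ g i b) (hS : ∀ i, HasSum (g i) (S i)) :
    HasSum (fun c : Fin n → β => ∏ i, g i (c i)) (∏ i, S i) := by
  induction n with
  | zero => simp
  | succ n ih =>
    have htail := ih (fun i => hg i.succ) (fun i => hS i.succ)
    have hsummable : Summable fun p : β × (Fin n → β) => g 0 p.1 * ∏ i : Fin n, g i.succ (p.2 i) :=
      Summable.mul_of_nonneg (f := g 0) (g := fun c : Fin n → β => ∏ i : Fin n, g i.succ (c i))
        (hS 0).summable htail.summable (hg 0) fun c => Finset.prod_nonneg fun i _ => hg _ _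
    have hcons : (fun c : Fin (n + 1) → β => ∏ i, g i (c i)) ∘ Fin.consEquiv (fun _ => β) =
        fun p : β × (Fin n → β) => g 0 p.1 * ∏ i : Fin n, g i.succ (p.2 i) := by
      funext p
      simp [Fin.consEquiv, Fin.prod_univ_succ]
    rw [← (Fin.consEquiv fun _ => β).hasSum_iff, hcons, Fin.prod_univ_succ]
    exact HasSum.mul (f := g 0) (g := fun c : Fin n → β => ∏ i : Fin n, g i.succ (c i))
      (hS 0) htail hsummable

theorem hasSum_rpow_neg_mul_succ {b x : ℝ} (hb : 1 < b) (hx : 0 < x) :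
    HasSum (fun k : ℕ => b ^ (-(x * (k + 1)))) (1 / (b ^ x - 1)) := by
  have hbx : 1 < b ^ x := Real.one_lt_rpow hb hx
  have hterm (k : ℕ) : b ^ (-(x * (k + 1))) = (b ^ x)⁻¹ * (b ^ x)⁻¹ ^ k := by
    rw [← pow_succ', ← Real.rpow_neg_one, ← Real.rpow_natCast, ← Real.rpow_mul (by positivity),
      ← Real.rpow_mul (by positivity)]
    push_cast
    ring_nf
  have hval : 1 / (b ^ x - 1) = (b ^ x)⁻¹ * (1 - (b ^ x)⁻¹)⁻¹ := by
    have : b ^ x - 1 ≠ 0 := by linarith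
    field_simp
  simp only [hterm, hval]
  exact (hasSum_geometric_of_lt_one (by positivity) (inv_lt_one_of_one_lt₀ hbx)).mul_left _

theorem prod_univ_fin_succ_eq_prod_Icc {M : Type*} [CommMonoid M] (f : ℕ → M) (n : ℕ) :
    ∏ j : Fin n, f (j + 1) = ∏ i ∈ Finset.Icc 1 n, f i := by
  rw [Fin.prod_univ_eq_prod_range (fun j => f (j + 1)), Finset.range_eq_Ico,
    Finset.prod_Ico_add' f, zero_add]
  rfl

theorem stmt11_general (lam : ℝ) (hlam : 0 < lam) (t m' : ℕ) :
    HasSum (fun a : {a : Fin t → ℕ // StrictAnti a ∧ ∀ i, m' ≤ a i} =>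
        (2:ℝ) ^ (-(2*lam * (∑ i, (a.1 i : ℝ)))))
      ((2:ℝ) ^ (-(2*lam*(t:ℝ)*((m':ℝ)-1))) *
        ∏ i ∈ Finset.Icc 1 t, 1/((2:ℝ)^(2*lam*(i:ℝ)) - 1)) := by
  have hterm (c : Fin t → ℕ) : (2:ℝ) ^ (-(2 * lam * ∑ i, (tupleOfGaps m' c i : ℝ))) =
      (2:ℝ) ^ (-(2 * lam * t * (m' - 1))) *
        ∏ j : Fin t, (2:ℝ) ^ (-(2 * lam * ((j : ℕ) + 1) * ((c j : ℝ) + 1))) := by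
    have hsum : ∑ i, (tupleOfGaps m' c i : ℝ) + t =
        t * m' + ∑ j : Fin t, ((j : ℕ) + 1 : ℝ) * (c j + 1) := by
      exact_mod_cast sum_tupleOfGaps_add m' c
    rw [← Real.rpow_sum_of_pos two_pos, ← Real.rpow_add two_pos,
      eq_sub_of_add_eq hsum, Finset.sum_neg_distrib]
    simp only [mul_assoc]
    rw [← Finset.mul_sum, ← Finset.mul_sum]
    congr 1
    ring
  have hprod := prod_univ_fin_succ_eq_prod_Icc (fun i : ℕ => 1 / ((2:ℝ) ^ (2 * lam * i) - 1)) t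
  push_cast at hprod
  rw [← (tupleOfGapsEquiv m' t).hasSum_iff, ← hprod]
  simp only [Function.comp_def, tupleOfGapsEquiv, Equiv.coe_fn_mk, hterm]
  exact (hasSum_prod_pi_of_nonneg (fun j k => by positivity)
    fun j => hasSum_rpow_neg_mul_succ one_lt_two (by positivity)).mul_left _

/-- Σ_{m'≤a_t<⋯<a_1} 2^{−2λ(a_1+⋯+a_t)}
= 2^{−2λt(m'−1)} ∏_{i=1}^{t} 1/(2^{2λi}−1). -/
theorem stmt11 (lam : ℝ) (hlam : 0 < lam) (t m' : ℕ) (ht : 1 ≤ t) (hm' : 1 ≤ m') :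
    HasSum (fun a : {a : Fin t → ℕ // StrictAnti a ∧ ∀ i, m' ≤ a i} =>
        (2:ℝ) ^ (-(2*lam * (∑ i, (a.1 i : ℝ)))))
      ((2:ℝ) ^ (-(2*lam*(t:ℝ)*((m':ℝ)-1))) *
        ∏ i ∈ Finset.Icc 1 t, 1/((2:ℝ)^(2*lam*(i:ℝ)) - 1)) :=
  stmt11_general lam hlam t m'
end

section
/- Let α ≥ 2 be an integer, let λ > 1/(2α) be a real number, let m' be a positive integer, and let p ∈ 𝔽₂[x] be an irreducible polynomial with deg(p) = m'. Then Σ_{k∈E, p ∣ tr_{m'}(k)} 2^{−2λ μ_α(⌊k/2⌋)} = Σ_{l∈E} 2^{−2λ μ_α(l·2^{m'−1})}. -/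
/-!
Since `deg p = m'` while `tr_{m'}(k)` has degree `< m'`, the divisibility `p ∣ tr_{m'}(k)` only
holds when `tr_{m'}(k) = 0`, i.e. when `2^{m'} ∣ k`. Writing `k = l · 2^{m'}`, the factor `2^{m'}`
changes neither the digit sum nor positivity, so `k ∈ E ↔ l ∈ E`, and `⌊k/2⌋ = l · 2^{m'-1}`.
-/

open scoped BigOperators

attribute [local instance] Classical.propDecidable

open scoped Polynomial

lemma coeff_trunc (m k i : ℕ) :
    (trunc m k).coeff i = if i < m ∧ k.testBit i then 1 else 0 := by
  simp [trunc, Polynomial.finsetSum_coeff, Polynomial.coeff_monomial, ite_and]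

lemma degree_trunc_lt (m k : ℕ) : (trunc m k).degree < m := by
  rw [Polynomial.degree_lt_iff_coeff_zero]
  intro i hi
  simp [coeff_trunc, not_lt.2 hi]

lemma trunc_eq_zero_iff (m k : ℕ) : trunc m k = 0 ↔ 2 ^ m ∣ k := by
  rw [Nat.dvd_iff_mod_eq_zero, Polynomial.ext_iff]
  refine ⟨fun h => Nat.eq_of_testBit_eq fun i => ?_, fun h i => ?_⟩
  · simpa [coeff_trunc, Nat.testBit_mod_two_pow] using h i
  · simpa [coeff_trunc, Nat.testBit_mod_two_pow] using congrArg (Nat.testBit · i) h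

lemma dvd_trunc_iff {p : (ZMod 2)[X]} {m : ℕ} (hdeg : p.natDegree = m) (k : ℕ) :
    p ∣ trunc m k ↔ 2 ^ m ∣ k := by
  rw [← trunc_eq_zero_iff]
  refine ⟨fun h => by_contra fun hne => ?_, fun h => h ▸ dvd_zero p⟩
  have hle := Polynomial.natDegree_le_of_dvd h hne
  have hlt := (Polynomial.natDegree_lt_iff_degree_lt hne).2 (degree_trunc_lt m k)
  omega

lemma mul_two_pow_mem_Eset_iff (m l : ℕ) : l * 2 ^ m ∈ Eset ↔ l ∈ Eset := by
  rcases l.eq_zero_or_pos with rfl | hl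
  · simp
  · simp [Eset, mul_comm l, Nat.digits_base_pow_mul one_lt_two hl, Nat.one_le_iff_ne_zero,
      hl.ne']

def Eset.equivMulTwoPow (m : ℕ) : Eset ≃ {k // k ∈ Eset ∧ 2 ^ m ∣ k} where
  toFun l := ⟨l * 2 ^ m, (mul_two_pow_mem_Eset_iff m l).2 l.2, dvd_mul_left _ _⟩
  invFun k := ⟨k / 2 ^ m, by
    rw [← mul_two_pow_mem_Eset_iff m, Nat.div_mul_cancel k.2.2]; exact k.2.1⟩
  left_inv l := Subtype.ext (Nat.mul_div_cancel _ (by positivity))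
  right_inv k := Subtype.ext (Nat.div_mul_cancel k.2.2)

theorem tsum_Eset_dvd_trunc {M : Type*} [AddCommMonoid M] [TopologicalSpace M]
    {p : (ZMod 2)[X]} {m : ℕ} (hdeg : p.natDegree = m) (f : ℕ → M) :
    ∑' k : {k // k ∈ Eset ∧ p ∣ trunc m k}, f k = ∑' l : Eset, f (l * 2 ^ m) :=
  (Equiv.tsum_eq ((Eset.equivMulTwoPow m).trans
    (Equiv.subtypeEquivRight fun k => and_congr_right' (dvd_trunc_iff hdeg k).symm))
    fun k => f k).symm

theorem stmt12_general (α : ℕ) (lam : ℝ)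
    (m' : ℕ) (hm' : 0 < m') (p : Polynomial (ZMod 2))
    (hdeg : p.natDegree = m') :
    ∑' k : {k : ℕ // k ∈ Eset ∧ p ∣ trunc m' k},
        (2:ℝ) ^ (-(2*lam*(mu α (k.1/2) : ℝ)))
      = ∑' l : ↥Eset, (2:ℝ) ^ (-(2*lam*(mu α ((l:ℕ) * 2^(m'-1)) : ℝ))) := by
  rw [tsum_Eset_dvd_trunc hdeg fun k => (2:ℝ) ^ (-(2*lam*(mu α (k/2) : ℝ)))]
  have h2 : 2 ^ m' = 2 ^ (m' - 1) * 2 := by rw [← pow_succ, Nat.sub_add_cancel hm']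
  refine tsum_congr fun l => ?_
  rw [h2, ← mul_assoc, Nat.mul_div_cancel _ two_pos]

/-- Σ_{k∈E, p ∣ tr_{m'}(k)} 2^{−2λμ_α(⌊k/2⌋)} = Σ_{l∈E} 2^{−2λμ_α(l·2^{m'−1})}. -/
theorem stmt12 (α : ℕ) (hα : 2 ≤ α) (lam : ℝ) (hlam : 1/(2*(α:ℝ)) < lam)
    (m' : ℕ) (hm' : 0 < m') (p : Polynomial (ZMod 2)) (hp : Irreducible p)
    (hdeg : p.natDegree = m') :
    ∑' k : {k : ℕ // k ∈ Eset ∧ p ∣ trunc m' k},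
        (2:ℝ) ^ (-(2*lam*(mu α (k.1/2) : ℝ)))
      = ∑' l : ↥Eset, (2:ℝ) ^ (-(2*lam*(mu α ((l:ℕ) * 2^(m'-1)) : ℝ))) :=
  stmt12_general α lam m' hm' p hdeg
end

section
/- Let α ≥ 2 and m' ≥ 1 be integers, let l be an integer with 0 ≤ l < 2^{m'}, and let x = l/2^{m'} with terminating binary expansion x = ξ_1 2^{−1} + ⋯ + ξ_{m'} 2^{−m'}, setting ξ_i = 0 for i > m'. Then ω_α(x) = Σ_{v=1}^{∞} (−1)^{v ξ_1} Σ_{0<a_v<⋯<a_1} 2^{−2 μ_α(2^{a_1−1}+⋯+2^{a_v−1})} (−1)^{ξ_{a_1+1}+⋯+ξ_{a_v+1}}, where the inner sums range over all strictly decreasing v-tuples of positive integers a_1 > ⋯ > a_v > 0, and both series converge absolutely. -/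
open scoped BigOperators

attribute [local instance] Classical.propDecidable

/-! Write `k ∈ E` as `k = 2m + κ₀` with `m ≥ 1`. The set of binary positions of `m` is a nonempty
finite set `{a₁ - 1 > ⋯ > a_v - 1}`, and the evenness of `δ(k) = κ₀ + v` forces `κ₀ ≡ v (mod 2)`.
Hence `k ↦ (v, a)` is a bijection from `E` onto the strictly decreasing tuples of positive
integers, under which `μ_α(⌊k/2⌋) = μ_α(2^{a₁-1} + ⋯ + 2^{a_v-1})` and
`wal_k(x) = (-1)^{v ξ₁ + ξ_{a₁+1} + ⋯ + ξ_{a_v+1}}`. Since `m < 2^{μ_α(m)}` for `α ≥ 1`, the terms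
of `ω_α` are `O(k⁻²)`, so the series converges absolutely and can be regrouped by `v`. -/

theorem digits_two_sum_two_mul_add (n : ℕ) {b : ℕ} (hb : b < 2) :
    (Nat.digits 2 (2 * n + b)).sum = b + (Nat.digits 2 n).sum := by
  rcases Nat.eq_zero_or_pos (2 * n + b) with h | h
  · obtain ⟨rfl, rfl⟩ : n = 0 ∧ b = 0 := by omega
    simp
  · rw [Nat.digits_def' one_lt_two h, List.sum_cons]
    congr <;> omega

theorem digits_two_sum_eq_length_bitIndices (n : ℕ) :
    (Nat.digits 2 n).sum = n.bitIndices.length := by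
  induction n using Nat.strong_induction_on with
  | _ n ih =>
    rcases Nat.eq_zero_or_pos n with rfl | hn
    · simp
    obtain ⟨m, b, hb, rfl⟩ : ∃ m b, b < 2 ∧ n = 2 * m + b :=
      ⟨n / 2, n % 2, Nat.mod_lt _ two_pos, (Nat.div_add_mod n 2).symm⟩
    rw [digits_two_sum_two_mul_add m hb, ih m (by omega)]
    interval_cases b <;> simp [Nat.add_comm 1]

theorem sum_toFinset_bitIndices_two_mul_add {M : Type*} [AddCommMonoid M] (g : ℕ → M) (n : ℕ)
    {b : ℕ} (hb : b < 2) :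
    ∑ i ∈ (2 * n + b).bitIndices.toFinset, g i
      = b • g 0 + ∑ i ∈ n.bitIndices.toFinset, g (i + 1) := by
  simp only [List.sum_toFinset _ Nat.bitIndices_nodup]
  interval_cases b <;> simp [List.map_map, Function.comp_def]

theorem le_mu_of_testBit {α n i : ℕ} (hα : 1 ≤ α) (hi : n.testBit i) : i + 1 ≤ mu α n := by
  set L := ((List.range (n + 1)).filter fun j => n.testBit j).reverse
  have hiL : i ∈ L := by
    simpa [L, hi] using
      Nat.lt_succ_of_le (Nat.lt_two_pow_self.le.trans (Nat.ge_two_pow_of_testBit hi))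
  have hL : L.Pairwise (· > ·) := List.pairwise_reverse.mpr (List.pairwise_lt_range.filter _)
  obtain ⟨h, t, hht⟩ : ∃ h t, L = h :: t := List.exists_cons_of_ne_nil (List.ne_nil_of_mem hiL)
  rw [hht] at hiL hL
  have hih : i ≤ h := by
    rcases List.mem_cons.mp hiL with rfl | hit
    · exact le_rfl
    · exact (List.rel_of_pairwise_cons hL hit).le
  obtain ⟨β, rfl⟩ := Nat.exists_eq_add_of_le' hα
  have hmu : mu (β + 1) n = h + 1 + ((t.take β).map (· + 1)).sum := by
    change ((L.take (β + 1)).map (· + 1)).sum = _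
    rw [hht, List.take_succ_cons, List.map_cons, List.sum_cons]
  omega

theorem lt_two_pow_mu {α : ℕ} (hα : 1 ≤ α) (n : ℕ) : n < 2 ^ mu α n :=
  Nat.lt_pow_two_of_testBit n fun i hi => Bool.eq_false_iff.mpr fun h => by
    have := le_mu_of_testBit hα h
    omega

theorem two_rpow_neg_two_mul (m : ℕ) : (2:ℝ) ^ (-(2:ℝ) * m) = ((2:ℝ) ^ m)⁻¹ ^ 2 := by
  rw [neg_mul, Real.rpow_neg zero_le_two, mul_comm, Real.rpow_mul zero_le_two, Real.rpow_natCast,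
    Real.rpow_two, inv_pow]

theorem summable_two_rpow_neg_two_mul_mu_half {α : ℕ} (hα : 1 ≤ α) :
    Summable fun k : ℕ => (2:ℝ) ^ (-(2:ℝ) * (mu α (k / 2) : ℝ)) := by
  have hbound (k : ℕ) :
      (2:ℝ) ^ (-(2:ℝ) * (mu α (k / 2) : ℝ)) ≤ 4 * (1 / ((k + 1 : ℕ) : ℝ) ^ 2) := by
    have hk : ((k + 1 : ℕ) : ℝ) ≤ 2 * 2 ^ mu α (k / 2) := by
      exact_mod_cast (by have := lt_two_pow_mu hα (k / 2); omega)
    calc (2:ℝ) ^ (-(2:ℝ) * (mu α (k / 2) : ℝ)) = (2 / (2 * 2 ^ mu α (k / 2))) ^ 2 := by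
          rw [two_rpow_neg_two_mul, div_mul_cancel_left₀ two_ne_zero]
      _ ≤ (2 / ((k + 1 : ℕ) : ℝ)) ^ 2 := by gcongr
      _ = 4 * (1 / ((k + 1 : ℕ) : ℝ) ^ 2) := by ring
  refine Summable.of_nonneg_of_le (fun _ => by positivity) hbound (Summable.mul_left 4 ?_)
  exact (summable_nat_add_iff 1).mpr (Real.summable_one_div_nat_pow.mpr one_lt_two)

theorem abs_wal (m' l k : ℕ) : |wal m' l k| = 1 := by
  simp [wal]

theorem wal_eq_neg_one_pow_sum_bitIndices (m' l k : ℕ) :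
    wal m' l k = (-1:ℝ) ^ ∑ i ∈ k.bitIndices.toFinset, xi m' l (i + 1) := by
  rw [wal, ← Finset.sum_filter]
  congr 2
  ext i
  simp only [Finset.mem_filter, Finset.mem_range, List.mem_toFinset, Nat.mem_bitIndices,
    and_iff_right_iff_imp]
  exact fun h => Nat.lt_succ_of_le (Nat.lt_two_pow_self.le.trans (Nat.ge_two_pow_of_testBit h))

theorem neg_one_pow_mod_two_mul {R : Type*} [Ring R] (v x : ℕ) :
    (-1 : R) ^ (v % 2 * x) = (-1) ^ (v * x) := by
  rw [neg_one_pow_eq_pow_mod_two, Nat.mul_mod, Nat.mod_mod, ← Nat.mul_mod,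
    ← neg_one_pow_eq_pow_mod_two]

def posEquivEset : {n : ℕ // 1 ≤ n} ≃ Eset where
  toFun n := ⟨2 * n + (Nat.digits 2 n).sum % 2, by omega, by
    rw [digits_two_sum_two_mul_add _ (Nat.mod_lt _ two_pos), Nat.even_iff]
    omega⟩
  invFun k := ⟨k.1 / 2, by
    obtain ⟨hk, heven⟩ := k.2
    by_contra h
    have hk1 : k.1 = 1 := by omega
    simp [hk1] at heven⟩
  left_inv n := by
    ext
    simp only
    omega
  right_inv k := by
    obtain ⟨k, -, heven⟩ := k
    have hk := digits_two_sum_two_mul_add (k / 2) (Nat.mod_lt k two_pos)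
    rw [Nat.div_add_mod, Nat.even_iff] at *
    ext
    simp only
    omega

def nonemptyFinsetEquivPos : {s : Finset ℕ // s.Nonempty} ≃ {n : ℕ // 1 ≤ n} :=
  Finset.equivBitIndices.symm.subtypeEquiv fun s => by
    simp [Nat.one_le_iff_ne_zero, Finset.sum_eq_zero_iff, Finset.Nonempty]

def decTuplesEquivOrderEmbedding (v : ℕ) : decTuples v ≃ (Fin v ↪o ℕ) where
  toFun a := OrderEmbedding.ofStrictMono (fun i => a.1 i.rev - 1) fun i j hij => by
    have := a.2.1 (Fin.rev_lt_rev.mpr hij)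
    have := a.2.2 i.rev
    dsimp only
    omega
  invFun f := ⟨fun i => f i.rev + 1,
    fun i j hij => by simpa using f.strictMono (Fin.rev_lt_rev.mpr hij), fun _ => Nat.succ_pos _⟩
  left_inv a := Subtype.ext <| funext fun i => by
    change a.1 i.rev.rev - 1 + 1 = a.1 i
    rw [Fin.rev_rev]
    have := a.2.2 i
    omega
  right_inv f := by ext i; simp

theorem sum_map_decTuplesEquivOrderEmbedding {M : Type*} [AddCommMonoid M] {v : ℕ}
    (a : decTuples v) (g : ℕ → M) :
    ∑ j ∈ Finset.univ.map (decTuplesEquivOrderEmbedding v a).toEmbedding, g j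
      = ∑ i, g (a.1 i - 1) := by
  rw [Finset.sum_map]
  exact Fintype.sum_equiv Fin.revPerm _ _ fun i => rfl

def decTuplesSigmaEquivEset : (Σ v : {v : ℕ // 1 ≤ v}, decTuples v.1) ≃ Eset :=
  (Equiv.sigmaCongrRight fun v : {v : ℕ // 1 ≤ v} =>
      (decTuplesEquivOrderEmbedding v.1).trans Set.powersetCard.ofFinEmbEquiv).trans <|
    (Equiv.sigmaSubtypeFiberEquivSubtype Finset.card fun _ => Finset.card_pos.symm).trans <|
      nonemptyFinsetEquivPos.trans posEquivEset

theorem decTuplesSigmaEquivEset_apply (v : {v : ℕ // 1 ≤ v}) (a : decTuples v.1) :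
    (decTuplesSigmaEquivEset ⟨v, a⟩ : ℕ)
      = 2 * ∑ j ∈ Finset.univ.map (decTuplesEquivOrderEmbedding v.1 a).toEmbedding, 2 ^ j
        + v.1 % 2 := by
  set N := ∑ j ∈ Finset.univ.map (decTuplesEquivOrderEmbedding v.1 a).toEmbedding, 2 ^ j
  have hN : (decTuplesSigmaEquivEset ⟨v, a⟩ : ℕ) = 2 * N + (Nat.digits 2 N).sum % 2 := rfl
  rw [hN, digits_two_sum_eq_length_bitIndices, ← List.toFinset_card_of_nodup Nat.bitIndices_nodup,
    Finset.toFinset_bitIndices_sum_two_pow, Finset.card_map, Finset.card_univ, Fintype.card_fin]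

theorem omega_summand_decTuplesSigmaEquivEset (α m' l : ℕ) (v : {v : ℕ // 1 ≤ v})
    (a : decTuples v.1) :
    (2:ℝ) ^ (-(2:ℝ) * (mu α ((decTuplesSigmaEquivEset ⟨v, a⟩ : ℕ) / 2) : ℝ)) *
        wal m' l (decTuplesSigmaEquivEset ⟨v, a⟩)
      = (-1:ℝ) ^ (v.1 * xi m' l 1) * ((2:ℝ) ^ (-(2:ℝ) * (mu α (∑ i, 2 ^ (a.1 i - 1)) : ℝ)) *
          (-1:ℝ) ^ ∑ i, xi m' l (a.1 i + 1)) := by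
  have hxi (i : Fin v.1) : xi m' l (a.1 i - 1 + 1 + 1) = xi m' l (a.1 i + 1) := by
    rw [Nat.sub_add_cancel (a.2.2 i)]
  rw [decTuplesSigmaEquivEset_apply, wal_eq_neg_one_pow_sum_bitIndices,
    sum_toFinset_bitIndices_two_mul_add _ _ (Nat.mod_lt _ two_pos),
    Finset.toFinset_bitIndices_sum_two_pow, Nat.mul_add_div two_pos,
    Nat.div_eq_of_lt (Nat.mod_lt _ two_pos), add_zero, sum_map_decTuplesEquivOrderEmbedding,
    sum_map_decTuplesEquivOrderEmbedding, Finset.sum_congr rfl fun i _ => hxi i, smul_eq_mul,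
    pow_add, neg_one_pow_mod_two_mul]
  ring

theorem Summable.norm_tsum_sigma {ι E : Type*} {β : ι → Type*} [SeminormedAddCommGroup E]
    {f : (Σ i, β i) → E} (hf : Summable fun p => ‖f p‖) :
    Summable fun i => ‖∑' b, f ⟨i, b⟩‖ :=
  hf.sigma.of_nonneg_of_le (fun _ => norm_nonneg _) fun i =>
    norm_tsum_le_tsum_norm (hf.sigma_factor i)

theorem stmt13_general (α m' : ℕ) (hα : 2 ≤ α) (l : ℕ) :
    (Summable (fun k : ↥Eset =>
        |(2:ℝ) ^ (-(2:ℝ) * (mu α ((k:ℕ)/2) : ℝ)) * wal m' l (k:ℕ)|)) ∧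
    (∀ v : ℕ, 1 ≤ v → Summable (fun a : decTuples v =>
        |(2:ℝ) ^ (-(2:ℝ) * (mu α (∑ i, 2^(a.1 i - 1)) : ℝ)) *
          (-1:ℝ)^(∑ i, xi m' l (a.1 i + 1))|)) ∧
    (Summable (fun v : {v : ℕ // 1 ≤ v} =>
        |((-1:ℝ)^(v.1 * xi m' l 1)) * ∑' a : decTuples v.1,
            (2:ℝ) ^ (-(2:ℝ) * (mu α (∑ i, 2^(a.1 i - 1)) : ℝ)) *
              (-1:ℝ)^(∑ i, xi m' l (a.1 i + 1))|)) ∧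
    omega α m' l = ∑' v : {v : ℕ // 1 ≤ v},
      ((-1:ℝ)^(v.1 * xi m' l 1)) * ∑' a : decTuples v.1,
          (2:ℝ) ^ (-(2:ℝ) * (mu α (∑ i, 2^(a.1 i - 1)) : ℝ)) *
            (-1:ℝ)^(∑ i, xi m' l (a.1 i + 1)) := by
  set e := decTuplesSigmaEquivEset
  set F : Eset → ℝ := fun k => (2:ℝ) ^ (-(2:ℝ) * (mu α ((k:ℕ)/2) : ℝ)) * wal m' l (k:ℕ)
  set T : (v : ℕ) → decTuples v → ℝ := fun v a =>
    (2:ℝ) ^ (-(2:ℝ) * (mu α (∑ i, 2^(a.1 i - 1)) : ℝ)) * (-1:ℝ)^(∑ i, xi m' l (a.1 i + 1))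
  have hterm (v : {v : ℕ // 1 ≤ v}) (a : decTuples v.1) :
      F (e ⟨v, a⟩) = (-1:ℝ) ^ (v.1 * xi m' l 1) * T v.1 a :=
    omega_summand_decTuplesSigmaEquivEset α m' l v a
  have hF : Summable fun k => |F k| :=
    ((summable_two_rpow_neg_two_mul_mu_half (one_le_two.trans hα)).subtype Eset).congr fun k => by
      rw [abs_mul, abs_wal, mul_one, abs_of_pos (by positivity)]
      rfl
  have hFe : Summable fun p => ‖F (e p)‖ := hF.comp_injective e.injective
  refine ⟨hF, fun v hv => ?_, ?_, ?_⟩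
  · simpa [hterm, abs_mul, T] using hFe.sigma_factor ⟨v, hv⟩
  · simpa [hterm, tsum_mul_left, T] using hFe.norm_tsum_sigma
  · calc omega α m' l = ∑' k, F k := rfl
      _ = ∑' p, F (e p) := (e.tsum_eq F).symm
      _ = ∑' (v) (a), F (e ⟨v, a⟩) := hFe.of_norm.tsum_sigma
      _ = _ := by simp only [hterm, tsum_mul_left, T]

/-- expansion of ω_α(x) for a dyadic rational x = l/2^{m'}, with absolute
convergence of all series involved. -/
theorem stmt13 (α m' : ℕ) (hα : 2 ≤ α) (hm' : 1 ≤ m') (l : ℕ) (hl : l < 2^m') :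
    (Summable (fun k : ↥Eset =>
        |(2:ℝ) ^ (-(2:ℝ) * (mu α ((k:ℕ)/2) : ℝ)) * wal m' l (k:ℕ)|)) ∧
    (∀ v : ℕ, 1 ≤ v → Summable (fun a : decTuples v =>
        |(2:ℝ) ^ (-(2:ℝ) * (mu α (∑ i, 2^(a.1 i - 1)) : ℝ)) *
          (-1:ℝ)^(∑ i, xi m' l (a.1 i + 1))|)) ∧
    (Summable (fun v : {v : ℕ // 1 ≤ v} =>
        |((-1:ℝ)^(v.1 * xi m' l 1)) * ∑' a : decTuples v.1,
            (2:ℝ) ^ (-(2:ℝ) * (mu α (∑ i, 2^(a.1 i - 1)) : ℝ)) *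
              (-1:ℝ)^(∑ i, xi m' l (a.1 i + 1))|)) ∧
    omega α m' l = ∑' v : {v : ℕ // 1 ≤ v},
      ((-1:ℝ)^(v.1 * xi m' l 1)) * ∑' a : decTuples v.1,
          (2:ℝ) ^ (-(2:ℝ) * (mu α (∑ i, 2^(a.1 i - 1)) : ℝ)) *
            (-1:ℝ)^(∑ i, xi m' l (a.1 i + 1)) :=
  stmt13_general α m' hα l
end

section
/- Let s, m, m' be positive integers with m ≤ m', let p ∈ 𝔽₂[x] with deg(p) = m', and let q = (q_1,…,q_s) ∈ 𝔽₂[x]^s. For 0 ≤ n < 2^m, identify n with the polynomial n(x) = n_0 + n_1 x + ⋯ ∈ 𝔽₂[x] via its binary digits n = n_0 + n_1·2 + ⋯, and set x_{n,j} = v_{m'}(n q_j / p). Then for every k = (k_1,…,k_s) ∈ ℕ₀^s, the quantity 2^{−m} Σ_{n=0}^{2^m−1} ∏_{j=1}^{s} wal_{k_j}(x_{n,j}) equals 1 if k ∈ D^⊥(q,p) and equals 0 otherwise. -/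
open scoped BigOperators

attribute [local instance] Classical.propDecidable

/-!
Write `t(h)` for the constant coefficient of `h /ₘ p`; it is additive in `h`, and the `l`-th
binary digit of `v_{m'}(f/p)` is `t(f X^l)`. Hence
`wal_κ(v_{m'}(f/p)) = (-1)^{t(f tr_{m'}(κ) X)}`, and for `x_{n,j} = v_{m'}(n q_j / p)` the
product over `j` is `(-1)^{t(n g X)}` with `g = ∑ⱼ tr_{m'}(k_j) q_j`. Expanding `n` in binary,
the average over `n < 2^m` factors as `∏_{β<m} (1 + (-1)^{c_β}) / 2` with
`c_β = t(g X^{β+1})`, which is `1` if all `c_β` vanish and `0` otherwise. Finally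
`c_0, …, c_{m-1}` are the first `m` digits of the expansion of `(g mod p) / p` in powers of
`X⁻¹`, and they vanish iff `deg (g mod p) < m' - m`, i.e. iff `k ∈ D^⊥(q,p)`.
-/

open Polynomial Finset

theorem Finset.sum_range_eq_sum_range_of_forall_ge {M : Type*} [AddCommMonoid M] {u : ℕ → M}
    {a b : ℕ} (ha : ∀ i ≥ a, u i = 0) (hb : ∀ i ≥ b, u i = 0) :
    ∑ i ∈ range a, u i = ∑ i ∈ range b, u i := by
  have hmin : ∀ i ≥ min a b, u i = 0 := fun i hi => by
    rcases le_total a b with h | h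
    · exact ha i (by omega)
    · exact hb i (by omega)
  rw [eventually_constant_sum hmin (min_le_left a b),
    eventually_constant_sum hmin (min_le_right a b)]

theorem Nat.lt_of_testBit_of_lt_two_pow {n m i : ℕ} (hn : n < 2 ^ m) (hi : n.testBit i = true) :
    i < m := by
  by_contra! h
  rw [Nat.testBit_lt_two_pow (hn.trans_le (Nat.pow_le_pow_right two_pos h))] at hi
  exact Bool.false_ne_true hi

theorem Nat.testBit_sum_two_pow (s : Finset ℕ) (j : ℕ) :
    (∑ i ∈ s, 2 ^ i).testBit j = true ↔ j ∈ s := by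
  rw [← Nat.mem_bitIndices, ← List.mem_toFinset, toFinset_bitIndices_sum_two_pow]

/-- Summing over `n < 2 ^ m` is summing over the subsets of `range m` of its binary digits. -/
theorem Finset.sum_range_two_pow_prod_ite_testBit {R : Type*} [CommSemiring R] (m : ℕ)
    (a : ℕ → R) :
    ∑ n ∈ range (2 ^ m), ∏ β ∈ range m, (if n.testBit β then a β else 1) =
      ∏ β ∈ range m, (1 + a β) := by
  rw [prod_one_add]
  refine sum_nbij' (fun n => (range m).filter fun β => n.testBit β) (fun t => ∑ i ∈ t, 2 ^ i)
    (fun n _ => mem_powerset.2 (filter_subset _ _)) (fun t ht => ?_) (fun n hn => ?_)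
    (fun t ht => ?_) (fun n _ => (prod_filter _ _).symm)
  · exact mem_range.2 (Nat.geomSum_lt le_rfl fun i hi => mem_range.1 (mem_powerset.1 ht hi))
  · have hbits : (range m).filter (fun β => n.testBit β) = n.bitIndices.toFinset := by
      ext i
      simp only [mem_filter, mem_range, List.mem_toFinset, Nat.mem_bitIndices]
      exact ⟨And.right, fun hi => ⟨Nat.lt_of_testBit_of_lt_two_pow (mem_range.1 hn) hi, hi⟩⟩
    simp only [hbits, sum_toFinset_bitIndices_two_pow]
  · ext j
    simp only [mem_filter, Nat.testBit_sum_two_pow]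
    exact ⟨And.right, fun hj => ⟨mem_powerset.1 ht hj, hj⟩⟩

namespace Polynomial

variable {R : Type*} [CommRing R] {p : R[X]}

theorem add_divByMonic (f g p : R[X]) : (f + g) /ₘ p = f /ₘ p + g /ₘ p := by
  by_cases hp : p.Monic
  · nontriviality R
    refine (div_modByMonic_unique _ (f %ₘ p + g %ₘ p) hp ⟨?_, ?_⟩).1
    · linear_combination modByMonic_add_div f p + modByMonic_add_div g p
    · exact (degree_add_le _ _).trans_lt
        (max_lt (degree_modByMonic_lt _ hp) (degree_modByMonic_lt _ hp))
  · simp [divByMonic_eq_of_not_monic _ hp]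

theorem sum_divByMonic {ι : Type*} (s : Finset ι) (f : ι → R[X]) (p : R[X]) :
    (∑ i ∈ s, f i) /ₘ p = ∑ i ∈ s, f i /ₘ p :=
  map_sum (AddMonoidHom.mk' (· /ₘ p) fun f g => add_divByMonic f g p) f s

theorem divByMonic_eq_C_coeff_natDegree (hp : p.Monic) {f : R[X]} (hf : f.degree ≤ p.degree) :
    f /ₘ p = C (f.coeff p.natDegree) := by
  nontriviality R
  refine (div_modByMonic_unique _ (f - p * C (f.coeff p.natDegree)) hp ⟨by ring, ?_⟩).1
  rw [degree_eq_natDegree hp.ne_zero, degree_lt_iff_coeff_zero]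
  intro i hi
  rw [coeff_sub, coeff_mul_C]
  rcases hi.eq_or_lt with rfl | hlt
  · rw [hp.coeff_natDegree, one_mul, sub_self]
  · rw [coeff_eq_zero_of_natDegree_lt hlt, zero_mul, sub_zero]
    refine coeff_eq_zero_of_degree_lt (hf.trans_lt ?_)
    rw [degree_eq_natDegree hp.ne_zero]
    exact_mod_cast hlt

theorem coeff_zero_mul_X_pow_divByMonic_modByMonic (hp : p.Monic) (g : R[X]) {l : ℕ}
    (hl : l ≠ 0) : (((g %ₘ p) * X ^ l) /ₘ p).coeff 0 = ((g * X ^ l) /ₘ p).coeff 0 := by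
  conv_rhs => rw [← modByMonic_add_div g p]
  rw [add_mul, add_divByMonic, coeff_add, mul_assoc, mul_divByMonic_cancel_left _ hp,
    coeff_mul_X_pow', if_neg (by omega), add_zero]

/-- The first `m` digits of the expansion of `r / p` in powers of `X⁻¹` vanish iff
`deg r < deg p - m`. -/
theorem forall_coeff_zero_mul_X_pow_divByMonic_eq_zero_iff [Nontrivial R] (hp : p.Monic)
    {r : R[X]} (hr : r.degree < p.degree) (m : ℕ) :
    (∀ β < m, ((r * X ^ (β + 1)) /ₘ p).coeff 0 = 0) ↔ r.degree < ↑(p.natDegree - m) := by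
  rcases eq_or_ne r 0 with rfl | hr0
  · simp [degree_zero]
  rw [degree_eq_natDegree hr0, degree_eq_natDegree hp.ne_zero, Nat.cast_lt] at hr
  rw [degree_eq_natDegree hr0, Nat.cast_lt]
  constructor
  · intro h
    by_contra! hle
    have hdig := h (p.natDegree - r.natDegree - 1) (by omega)
    rw [Nat.sub_add_cancel (by omega), divByMonic_eq_C_coeff_natDegree hp, coeff_C_zero,
      coeff_mul_X_pow', if_pos (by omega), Nat.sub_sub_self hr.le] at hdig
    · exact hr0 (leadingCoeff_eq_zero.1 hdig)
    · rw [degree_mul_X_pow, degree_eq_natDegree hr0, degree_eq_natDegree hp.ne_zero]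
      exact_mod_cast (by omega : r.natDegree + (p.natDegree - r.natDegree) ≤ p.natDegree)
  · intro h β hβ
    rw [(divByMonic_eq_zero_iff hp).2, coeff_zero]
    rw [degree_mul_X_pow, degree_eq_natDegree hr0, degree_eq_natDegree hp.ne_zero]
    exact_mod_cast (by omega : r.natDegree + (β + 1) < p.natDegree)

theorem exists_degree_lt_dvd_sub_iff (hp : p.Monic) {N : ℕ} (hN : N ≤ p.natDegree) (g : R[X]) :
    (∃ a : R[X], a.degree < N ∧ p ∣ g - a) ↔ (g %ₘ p).degree < N := by
  nontriviality R
  constructor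
  · rintro ⟨a, ha, hdvd⟩
    rwa [modByMonic_eq_of_dvd_sub hp hdvd, (modByMonic_eq_self_iff hp).2]
    exact ha.trans_le (by rw [degree_eq_natDegree hp.ne_zero]; exact_mod_cast hN)
  · exact fun h => ⟨g %ₘ p, h, by rw [← dvd_neg, neg_sub]; exact dvd_modByMonic_sub g p⟩

end Polynomial

theorem ZMod.eq_zero_or_eq_one (c : ZMod 2) : c = 0 ∨ c = 1 := by
  revert c
  decide

theorem neg_one_pow_eq_neg_one_pow_val_natCast {R : Type*} [Ring R]
    (E : ℕ) : (-1 : R) ^ E = (-1) ^ (E : ZMod 2).val := by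
  rw [ZMod.val_natCast, ← neg_one_pow_eq_pow_mod_two]

theorem prod_neg_one_pow_val {R ι : Type*} [CommRing R] (s : Finset ι)
    (a : ι → ZMod 2) : ∏ i ∈ s, (-1 : R) ^ (a i).val = (-1) ^ (∑ i ∈ s, a i).val := by
  rw [prod_pow_eq_pow_sum, neg_one_pow_eq_neg_one_pow_val_natCast, Nat.cast_sum]
  simp only [ZMod.natCast_zmod_val]

theorem one_add_neg_one_pow_val {R : Type*} [Ring R] (c : ZMod 2) :
    1 + (-1 : R) ^ c.val = if c = 0 then 2 else 0 := by
  rcases ZMod.eq_zero_or_eq_one c with rfl | rfl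
  · norm_num
  · simp [ZMod.val_one]

theorem Polynomial.Monic.of_ne_zero_zmod_two {p : (ZMod 2)[X]} (hp : p ≠ 0) : p.Monic :=
  (ZMod.eq_zero_or_eq_one _).resolve_left (leadingCoeff_ne_zero.2 hp)

theorem trunc_eq_sum (N κ : ℕ) :
    trunc N κ = ∑ i ∈ range N, if κ.testBit i then X ^ i else 0 := by
  refine sum_congr rfl fun i _ => ?_
  split_ifs <;> simp [X_pow_eq_monomial]

theorem nPoly_eq_sum {m n : ℕ} (hn : n < 2 ^ m) :
    nPoly n = ∑ β ∈ range m, if n.testBit β then X ^ β else 0 := by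
  rw [nPoly, trunc_eq_sum]
  refine sum_range_eq_sum_range_of_forall_ge (fun i hi => if_neg fun h => ?_)
    (fun i hi => if_neg fun h => ?_)
  · have := Nat.lt_of_testBit_of_lt_two_pow Nat.lt_two_pow_self h
    omega
  · have := Nat.lt_of_testBit_of_lt_two_pow hn h
    omega

theorem testBit_vnum (f p : (ZMod 2)[X]) {m' l : ℕ} (h1 : 1 ≤ l) (h2 : l ≤ m') :
    (vnum m' f p).testBit (m' - l) = true ↔ ((f * X ^ l) / p).coeff 0 = 1 := by
  have hbits : vnum m' f p = ∑ i ∈ ((Icc 1 m').filter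
      fun l => ((f * X ^ l) / p).coeff 0 = 1).image (m' - ·), 2 ^ i := by
    rw [sum_image fun a ha b hb hab => ?_, sum_filter]
    · rfl
    · simp only [coe_filter, mem_Icc, Set.mem_ofPred_eq] at ha hb hab
      omega
  rw [hbits, Nat.testBit_sum_two_pow]
  simp only [mem_image, mem_filter, mem_Icc]
  constructor
  · rintro ⟨l', ⟨⟨h1', h2'⟩, ht⟩, he⟩
    obtain rfl : l' = l := by omega
    exact ht
  · exact fun ht => ⟨l, ⟨⟨h1, h2⟩, ht⟩, rfl⟩

theorem natCast_xi_vnum (f p : (ZMod 2)[X]) {m' l : ℕ} (h1 : 1 ≤ l) (h2 : l ≤ m') :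
    ((xi m' (vnum m' f p) l : ℕ) : ZMod 2) = ((f * X ^ l) / p).coeff 0 := by
  simp only [xi, h1, h2, true_and, testBit_vnum f p h1 h2]
  generalize ((f * X ^ l) / p).coeff 0 = t
  rcases ZMod.eq_zero_or_eq_one t with rfl | rfl <;> simp

theorem wal_vnum {p : (ZMod 2)[X]} (hp : p.Monic) (m' : ℕ) (f : (ZMod 2)[X]) (κ : ℕ) :
    wal m' (vnum m' f p) κ = (-1) ^ (((f * trunc m' κ * X) /ₘ p).coeff 0).val := by
  rw [wal, neg_one_pow_eq_neg_one_pow_val_natCast, Nat.cast_sum]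
  congr 2
  rw [trunc_eq_sum, mul_sum, sum_mul, sum_divByMonic, finsetSum_coeff]
  rw [sum_range_eq_sum_range_of_forall_ge (b := m') (fun i hi => ?_) (fun i hi => ?_)]
  · refine sum_congr rfl fun i hi => ?_
    have hi := mem_range.1 hi
    split_ifs
    · rw [natCast_xi_vnum f p (by omega) (by omega), mul_assoc, ← pow_succ,
        divByMonic_eq_div _ hp]
    · simp
  · rw [if_neg fun h => by have := Nat.lt_of_testBit_of_lt_two_pow Nat.lt_two_pow_self h; omega,
      Nat.cast_zero]
  · simp [xi, show ¬ i + 1 ≤ m' by omega]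

theorem prod_wal_vnum_nPoly {p : (ZMod 2)[X]} (hp : p.Monic) {m n : ℕ} (hn : n < 2 ^ m)
    (s m' : ℕ) (q : ℕ → (ZMod 2)[X]) (k : ℕ → ℕ) :
    ∏ j ∈ range s, wal m' (vnum m' (nPoly n * q j) p) (k j) =
      ∏ β ∈ range m, if n.testBit β then
        (-1) ^ ((((∑ j ∈ range s, trunc m' (k j) * q j) * X ^ (β + 1)) /ₘ p).coeff 0).val
      else 1 := by
  set g := ∑ j ∈ range s, trunc m' (k j) * q j
  have hexpand : ∑ j ∈ range s, nPoly n * q j * trunc m' (k j) * X =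
      ∑ β ∈ range m, if n.testBit β then g * X ^ (β + 1) else 0 :=
    calc ∑ j ∈ range s, nPoly n * q j * trunc m' (k j) * X = nPoly n * g * X := by
          rw [mul_sum, sum_mul]
          exact sum_congr rfl fun j _ => by ring
      _ = _ := by
          rw [nPoly_eq_sum hn, sum_mul, sum_mul]
          exact sum_congr rfl fun β _ => by split_ifs <;> ring
  simp only [wal_vnum hp, prod_neg_one_pow_val, ← finsetSum_coeff, ← sum_divByMonic, hexpand]
  rw [sum_divByMonic, finsetSum_coeff, ← prod_neg_one_pow_val]
  refine prod_congr rfl fun β _ => ?_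
  split_ifs <;> simp

theorem inDual_iff_forall_coeff_zero_divByMonic_eq_zero {m m' s : ℕ} {p : (ZMod 2)[X]}
    (hp : p.Monic) (hdeg : p.natDegree = m') (q : ℕ → (ZMod 2)[X]) (k : ℕ → ℕ) :
    inDual m m' s q p k ↔
      ∀ β < m,
        (((∑ j ∈ range s, trunc m' (k j) * q j) * X ^ (β + 1)) /ₘ p).coeff 0 = 0 := by
  set g := ∑ j ∈ range s, trunc m' (k j) * q j
  have h := forall_coeff_zero_mul_X_pow_divByMonic_eq_zero_iff hp (degree_modByMonic_lt g hp) m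
  simp only [hdeg, fun β : ℕ => coeff_zero_mul_X_pow_divByMonic_modByMonic hp g β.succ_ne_zero]
    at h
  rw [h]
  exact exists_degree_lt_dvd_sub_iff hp (hdeg ▸ Nat.sub_le m' m) g

theorem stmt16_general (s m m' : ℕ) (hm : 0 < m) (hmm : m ≤ m')
    (p : Polynomial (ZMod 2)) (hdeg : p.natDegree = m')
    (q : ℕ → Polynomial (ZMod 2)) (k : ℕ → ℕ) :
    (1/(2:ℝ)^m) * ∑ n ∈ Finset.range (2^m),
        ∏ j ∈ Finset.range s, wal m' (vnum m' (nPoly n * q j) p) (k j)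
      = if inDual m m' s q p k then 1 else 0 := by
  have hp : p.Monic := .of_ne_zero_zmod_two (by rintro rfl; simp at hdeg; omega)
  rw [sum_congr rfl fun n hn => prod_wal_vnum_nPoly hp (mem_range.1 hn) s m' q k,
    sum_range_two_pow_prod_ite_testBit, inDual_iff_forall_coeff_zero_divByMonic_eq_zero hp hdeg]
  simp only [one_add_neg_one_pow_val, prod_ite_zero, prod_const, card_range, mem_range]
  split_ifs <;> simp

/-- character property of higher order polynomial lattice point sets:
2^{−m} Σ_{n<2^m} ∏_j wal_{k_j}(x_{n,j}) is 1 if k ∈ D^⊥(q,p) and 0 otherwise. -/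
theorem stmt16 (s m m' : ℕ) (hs : 0 < s) (hm : 0 < m) (hmm : m ≤ m')
    (p : Polynomial (ZMod 2)) (hdeg : p.natDegree = m')
    (q : ℕ → Polynomial (ZMod 2)) (k : ℕ → ℕ) :
    (1/(2:ℝ)^m) * ∑ n ∈ Finset.range (2^m),
        ∏ j ∈ Finset.range s, wal m' (vnum m' (nPoly n * q j) p) (k j)
      = if inDual m m' s q p k then 1 else 0 :=
  stmt16_general s m m' hm hmm p hdeg q k
end
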